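/- arXiv:2310.18050 — 4 statements merged into one kernel-verified Lean document; each statement's English description precedes it below -/
import Mathlib

section
/- Let d ≥ 1 be an integer and δ > 0. Then the cubic equation √δ·γ³ + (4d+1)·γ² − d² = 0 has exactly one positive solution γ_δ, and the function F(γ) = (8d+2+γ√δ)/(4d) + √( ((8d+2+γ√δ)/(4d))² + √δ/(2γ) ) attains its minimum over γ ∈ (0,∞) exactly at γ = γ_δ, with minimum value F(γ_δ) = d/γ_δ². -/
open MeasureTheory Real Set
open scoped ENNReal NNReal BigOperators

noncomputable section

namespace Heis

/-- The underlying space `ℝ^d × ℝ^d × ℝ` of the Heisenberg group `ℍ^d`,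
with coordinates `(x, y, t)`, `z = (x, y)`. -/
abbrev P (d : ℕ) := (Fin d → ℝ) × (Fin d → ℝ) × ℝ

variable {d : ℕ}

/-- `|z|²`, the squared Euclidean norm of the horizontal variable `z = (x,y)`. -/
def znormSq (p : P d) : ℝ := (∑ j, p.1 j ^ 2) + (∑ j, p.2.1 j ^ 2)

/-- `|z|`, the Euclidean norm of the horizontal variable. -/
def znorm (p : P d) : ℝ := Real.sqrt (znormSq p)

/-- The Koranyi norm `|(z,t)|_H = (|z|⁴ + t²)^(1/4)`. -/
def koranyi (p : P d) : ℝ := (znormSq p ^ 2 + p.2.2 ^ 2) ^ ((1 : ℝ) / 4)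

/-- Coordinate direction `∂/∂x_j`. -/
def eX (j : Fin d) : P d := (Pi.single j 1, 0, 0)

/-- Coordinate direction `∂/∂y_j`. -/
def eY (j : Fin d) : P d := (0, Pi.single j 1, 0)

/-- Coordinate direction `∂/∂t`. -/
def eT : P d := (0, 0, 1)

variable {E : Type*} [NormedAddCommGroup E] [NormedSpace ℝ E]

/-- The left-invariant vector field `X_j = ∂/∂x_j + 2 y_j ∂/∂t` applied to `u`. -/
def Xd (j : Fin d) (u : P d → E) (p : P d) : E :=
  fderiv ℝ u p (eX j) + (2 * p.2.1 j) • fderiv ℝ u p eT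

/-- The left-invariant vector field `Y_j = ∂/∂y_j − 2 x_j ∂/∂t` applied to `u`. -/
def Yd (j : Fin d) (u : P d → E) (p : P d) : E :=
  fderiv ℝ u p (eY j) - (2 * p.1 j) • fderiv ℝ u p eT

/-- The sublaplacian `L u = −Σ_j (X_j² u + Y_j² u)`. -/
def subL (u : P d → E) (p : P d) : E :=
  - ∑ j, (Xd j (Xd j u) p + Yd j (Yd j u) p)

/-- `|∇_H u|²`, the squared length of the horizontal gradient. -/
def gradHSq (u : P d → E) (p : P d) : ℝ :=
  ∑ j, (‖Xd j u p‖ ^ 2 + ‖Yd j u p‖ ^ 2)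

/-- `|∇_H u|`, the pointwise length of the horizontal gradient. -/
def gradHNorm (u : P d → E) (p : P d) : ℝ := Real.sqrt (gradHSq u p)

/-- The `L²` norm, with values in `[0,∞]`, of a (pointwise absolute value of a) function. -/
def L2 (g : P d → ℝ) : ℝ≥0∞ :=
  (∫⁻ p : P d, ENNReal.ofReal (g p ^ 2)) ^ ((1 : ℝ) / 2)

/-- A function on `ℍ^d` is radial if it only depends on the Koranyi norm. -/
def IsRadial (g : P d → ℂ) : Prop :=
  ∃ g₀ : ℝ → ℂ, ∀ p : P d, g p = g₀ (koranyi p)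

/-- The sign function, with the convention `sgn 0 = 1`. -/
def sgn (w : ℝ) : ℝ := if w = 0 then 1 else w / |w|

/-- The phase `ψ(z,t) = √(d/2) Γ(d/2)/Γ((d+1)/2) sgn(λ₂) √|λ₁| |(z,t)|_H`. -/
def phase (lam : ℂ) (p : P d) : ℝ :=
  Real.sqrt ((d : ℝ) / 2) * (Real.Gamma ((d : ℝ) / 2) / Real.Gamma (((d : ℝ) + 1) / 2)) *
    sgn lam.im * Real.sqrt |lam.re| * koranyi p

/-- The gauge transform `u⁻ = e^{−iψ} u`. -/
def uMinus (lam : ℂ) (u : P d → ℂ) (p : P d) : ℂ :=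
  Complex.exp (-Complex.I * (phase lam p : ℂ)) * u p

/-- The Euler vector field `𝔼 = z·∇_z + 2t ∂_t` applied to `u`. -/
def euler (u : P d → E) (p : P d) : E :=
  fderiv ℝ u p (p.1, p.2.1, 2 * p.2.2)

end Heis

end
/-- The constant function `F(γ)` whose minimum over `γ > 0` is `K_d(δ)`. -/
noncomputable def Kfun (d : ℕ) (δ γ : ℝ) : ℝ :=
  (8 * (d : ℝ) + 2 + γ * Real.sqrt δ) / (4 * d) +
    Real.sqrt (((8 * (d : ℝ) + 2 + γ * Real.sqrt δ) / (4 * d)) ^ 2 + Real.sqrt δ / (2 * γ))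

/-!
`F(γ) = A + √(A² + B)` is the positive root of the quadratic `x² - 2A x - B`, with
`A = (8d+2+γ√δ)/(4d)` and `B = √δ/(2γ)`. Hence `K < F(γ)` as soon as the quadratic is negative
at `K`. For `K = d/γ_δ²` and `γ_δ` the positive root of the cubic, the cubic lets one rewrite the
value of the quadratic at `K` as `-√δ (γ - γ_δ)² / (2γ γ_δ²)`, which vanishes exactly at
`γ = γ_δ` and is negative elsewhere.
-/

theorem lt_add_sqrt_sq_add_of_quadratic_neg {A B K : ℝ} (h : K ^ 2 - 2 * A * K - B < 0) :
    K < A + √(A ^ 2 + B) := by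
  have hsq : (K - A) ^ 2 < A ^ 2 + B := by linarith
  have : |K - A| < √(A ^ 2 + B) := by
    rw [← Real.sqrt_sq_eq_abs]
    exact Real.sqrt_lt_sqrt (sq_nonneg _) hsq
  linarith [le_abs_self (K - A)]

theorem add_sqrt_sq_add_of_quadratic_eq_zero {A B K : ℝ} (hB : 0 ≤ B) (hK : 0 < K)
    (h : K ^ 2 - 2 * A * K - B = 0) : A + √(A ^ 2 + B) = K := by
  have hAK : A ≤ K := by nlinarith
  rw [show A ^ 2 + B = (K - A) ^ 2 by linear_combination -h, Real.sqrt_sq (sub_nonneg.2 hAK)]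
  ring

theorem existsUnique_pos_cubic_root {s a m : ℝ} (hs : 0 ≤ s) (ha : 0 < a) (hm : 0 < m) :
    ∃! γ : ℝ, 0 < γ ∧ s * γ ^ 3 + a * γ ^ 2 - m = 0 := by
  set f : ℝ → ℝ := fun γ => s * γ ^ 3 + a * γ ^ 2 - m
  have hmono : StrictMonoOn f (Ici 0) := fun x hx y _ hxy => by
    have h2 := pow_lt_pow_left₀ hxy hx two_ne_zero
    have h3 := pow_lt_pow_left₀ hxy hx three_ne_zero
    simp only [f]
    nlinarith [mul_le_mul_of_nonneg_left h3.le hs]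
  -- at `√(m/a)` the quadratic part alone already equals `m`
  have hb : f (√(m / a)) = s * √(m / a) ^ 3 := by
    simp only [f]
    rw [Real.sq_sqrt (by positivity)]
    field_simp
    ring
  obtain ⟨c, hc, hfc⟩ : ∃ c ∈ Icc 0 (√(m / a)), f c = 0 :=
    intermediate_value_Icc (Real.sqrt_nonneg _) (by fun_prop)
      ⟨by simp [f, hm.le], by rw [hb]; positivity⟩
  have hc0 : 0 < c := hc.1.lt_of_ne <| by rintro rfl; simp [f, hm.ne'] at hfc
  refine ⟨c, ⟨hc0, hfc⟩, fun γ ⟨hγ, hfγ⟩ => ?_⟩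
  exact hmono.injOn hγ.le hc0.le (hfγ.trans hfc.symm)

section KfunMinimum

variable {d : ℕ} {δ c : ℝ}

theorem Kfun_quadratic_eq_of_cubic_root (hd : d ≠ 0) (hc : c ≠ 0)
    (hroot : √δ * c ^ 3 + (4 * (d : ℝ) + 1) * c ^ 2 - (d : ℝ) ^ 2 = 0) {γ : ℝ} (hγ : γ ≠ 0) :
    (d / c ^ 2) ^ 2 - 2 * ((8 * (d : ℝ) + 2 + γ * √δ) / (4 * d)) * (d / c ^ 2) - √δ / (2 * γ)
      = -(√δ * (γ - c) ^ 2) / (2 * γ * c ^ 2) := by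
  field_simp
  linear_combination (-8 * γ) * hroot

variable (hd : d ≠ 0) (hδ : 0 < δ) (hc : 0 < c)
  (hroot : √δ * c ^ 3 + (4 * (d : ℝ) + 1) * c ^ 2 - (d : ℝ) ^ 2 = 0)
include hd hδ hc hroot

theorem Kfun_cubic_root : Kfun d δ c = d / c ^ 2 := by
  have := Kfun_quadratic_eq_of_cubic_root hd hc.ne' hroot hc.ne'
  rw [sub_self, zero_pow two_ne_zero, mul_zero, neg_zero, zero_div] at this
  exact add_sqrt_sq_add_of_quadratic_eq_zero (by positivity) (by positivity) this

theorem cubic_root_lt_Kfun {γ : ℝ} (hγ : 0 < γ) (hne : γ ≠ c) : d / c ^ 2 < Kfun d δ γ := by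
  apply lt_add_sqrt_sq_add_of_quadratic_neg
  rw [Kfun_quadratic_eq_of_cubic_root hd hc.ne' hroot hγ.ne', neg_div]
  have : γ - c ≠ 0 := sub_ne_zero.2 hne
  have : 0 < √δ := Real.sqrt_pos.2 hδ
  exact neg_neg_of_pos (by positivity)

end KfunMinimum

/-- the cubic `√δ γ³ + (4d+1)γ² − d² = 0` has a unique positive root `γ_δ`,
which is the unique minimizer of `F` on `(0,∞)`, with minimum value `d/γ_δ²`. -/
theorem stmt3 (d : ℕ) (hd : 1 ≤ d) (δ : ℝ) (hδ : 0 < δ) :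
    ∃ γδ : ℝ,
      (0 < γδ ∧ Real.sqrt δ * γδ ^ 3 + (4 * (d : ℝ) + 1) * γδ ^ 2 - (d : ℝ) ^ 2 = 0) ∧
      (∀ γ : ℝ, 0 < γ →
        Real.sqrt δ * γ ^ 3 + (4 * (d : ℝ) + 1) * γ ^ 2 - (d : ℝ) ^ 2 = 0 → γ = γδ) ∧
      Kfun d δ γδ = (d : ℝ) / γδ ^ 2 ∧
      (∀ γ : ℝ, 0 < γ → Kfun d δ γδ ≤ Kfun d δ γ) ∧
      (∀ γ : ℝ, 0 < γ → Kfun d δ γ = Kfun d δ γδ → γ = γδ) := by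
  have hd0 : d ≠ 0 := Nat.one_le_iff_ne_zero.1 hd
  obtain ⟨c, ⟨hc, hroot⟩, huniq⟩ :=
    existsUnique_pos_cubic_root (Real.sqrt_nonneg δ) (by positivity : (0 : ℝ) < 4 * d + 1)
      (by positivity : (0 : ℝ) < (d : ℝ) ^ 2)
  have hKc := Kfun_cubic_root hd0 hδ hc hroot
  refine ⟨c, ⟨hc, hroot⟩, fun γ hγ h => huniq γ ⟨hγ, h⟩, hKc, fun γ hγ => ?_, fun γ hγ h => ?_⟩
  · rcases eq_or_ne γ c with rfl | hne
    · rfl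
    · exact hKc ▸ (cubic_root_lt_Kfun hd0 hδ hc hroot hγ hne).le
  · by_contra hne
    exact (cubic_root_lt_Kfun hd0 hδ hc hroot hγ hne).ne' (h.trans hKc)
end

section
/- (Garofalo–Lanconelli Hardy inequality.) Let d ≥ 1 be an integer. For every smooth compactly supported u : ℝ^{2d}×ℝ → ℂ, ∫ (|z|²/|(z,t)|_H⁴) |u(z,t)|² dz dt ≤ (1/d²) ∫ |∇_H u(z,t)|² dz dt. -/
open MeasureTheory Real Set
open scoped ENNReal NNReal BigOperators

namespace S13
open Heis MeasureTheory

variable {d : ℕ}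

instance (d : ℕ) :
    ((volume : Measure (Fin d → ℝ)).prod
      ((volume : Measure (Fin d → ℝ)).prod (volume : Measure ℝ))).IsAddHaarMeasure := by
  have h1 : ((volume : Measure (Fin d → ℝ)).prod (volume : Measure ℝ)).IsAddHaarMeasure :=
    inferInstance
  exact Measure.prod.instIsAddHaarMeasure _ _

instance (d : ℕ) : (volume : Measure (P d)).IsAddHaarMeasure := by
  show ((volume : Measure (Fin d → ℝ)).prod
      ((volume : Measure (Fin d → ℝ)).prod (volume : Measure ℝ))).IsAddHaarMeasure
  infer_instance

noncomputable def LX (j : Fin d) : P d →L[ℝ] ℝ :=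
  (ContinuousLinearMap.proj j).comp (ContinuousLinearMap.fst ℝ _ _)
noncomputable def LY (j : Fin d) : P d →L[ℝ] ℝ :=
  (ContinuousLinearMap.proj j).comp
    ((ContinuousLinearMap.fst ℝ _ _).comp (ContinuousLinearMap.snd ℝ _ _))
noncomputable def LT : P d →L[ℝ] ℝ :=
  (ContinuousLinearMap.snd ℝ _ _).comp (ContinuousLinearMap.snd ℝ _ _)

@[simp] lemma LX_apply (j : Fin d) (v : P d) : LX j v = v.1 j := rfl
@[simp] lemma LY_apply (j : Fin d) (v : P d) : LY j v = v.2.1 j := rfl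
@[simp] lemma LT_apply (v : P d) : LT v = v.2.2 := rfl

@[simp] lemma eX_1 (j : Fin d) : (eX j : P d).1 = Pi.single j 1 := rfl
@[simp] lemma eX_21 (j : Fin d) : (eX j : P d).2.1 = 0 := rfl
@[simp] lemma eX_22 (j : Fin d) : (eX j : P d).2.2 = 0 := rfl
@[simp] lemma eY_1 (j : Fin d) : (eY j : P d).1 = 0 := rfl
@[simp] lemma eY_21 (j : Fin d) : (eY j : P d).2.1 = Pi.single j 1 := rfl
@[simp] lemma eY_22 (j : Fin d) : (eY j : P d).2.2 = 0 := rfl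
@[simp] lemma eT_1 : (eT : P d).1 = 0 := rfl
@[simp] lemma eT_21 : (eT : P d).2.1 = 0 := rfl
@[simp] lemma eT_22 : (eT : P d).2.2 = 1 := rfl

noncomputable def DS (p : P d) : P d →L[ℝ] ℝ :=
  ∑ i, ((2 * p.1 i) • LX i + (2 * p.2.1 i) • LY i)

lemma DS_apply (p v : P d) :
    DS p v = ∑ i, (2 * p.1 i * v.1 i + 2 * p.2.1 i * v.2.1 i) := by
  simp [DS, ContinuousLinearMap.sum_apply, smul_eq_mul]

@[simp] lemma DS_eX (p : P d) (j : Fin d) : DS p (eX j) = 2 * p.1 j := by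
  simp [DS_apply, Pi.single_apply]
@[simp] lemma DS_eY (p : P d) (j : Fin d) : DS p (eY j) = 2 * p.2.1 j := by
  simp [DS_apply, Pi.single_apply]
@[simp] lemma DS_eT (p : P d) : DS p eT = 0 := by
  simp [DS_apply]

lemma hasFDerivAt_znormSq (p : P d) : HasFDerivAt znormSq (DS p) p := by
  have h : ∀ i : Fin d, ∀ _ : i ∈ Finset.univ,
      HasFDerivAt (fun q : P d => q.1 i ^ 2 + q.2.1 i ^ 2)
        ((2 * p.1 i) • LX i + (2 * p.2.1 i) • LY i) p := by
    intro i _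
    have hx : HasFDerivAt (fun q : P d => q.1 i ^ 2) ((2 * p.1 i) • LX i) p := by
      have := ((LX i).hasFDerivAt (x := p)).mul ((LX i).hasFDerivAt (x := p))
      simpa [Pi.mul_def, pow_two, two_mul, add_smul] using this
    have hy : HasFDerivAt (fun q : P d => q.2.1 i ^ 2) ((2 * p.2.1 i) • LY i) p := by
      have := ((LY i).hasFDerivAt (x := p)).mul ((LY i).hasFDerivAt (x := p))
      simpa [Pi.mul_def, pow_two, two_mul, add_smul] using this
    exact hx.add hy
  have hsum := HasFDerivAt.fun_sum h
  have : znormSq = fun q : P d => ∑ i, (q.1 i ^ 2 + q.2.1 i ^ 2) := by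
    funext q; rw [znormSq, Finset.sum_add_distrib]
  rw [this, DS]
  exact hsum

lemma contDiff_znormSq : ContDiff ℝ 1 (znormSq (d := d)) := by
  have : znormSq = fun q : P d => ∑ i, (q.1 i ^ 2 + q.2.1 i ^ 2) := by
    funext q; rw [znormSq, Finset.sum_add_distrib]
  rw [this]
  exact ContDiff.sum fun i _ => (((LX i).contDiff).pow 2).add (((LY i).contDiff).pow 2)

end S13
namespace S13
open Heis MeasureTheory

variable {d : ℕ}

/-- regularized fourth power of the Koranyi gauge -/
noncomputable def Gf (ε : ℝ) (p : P d) : ℝ := znormSq p ^ 2 + p.2.2 ^ 2 + ε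
noncomputable def Nf (j : Fin d) (p : P d) : ℝ := znormSq p * p.1 j + p.2.2 * p.2.1 j
noncomputable def Mf (j : Fin d) (p : P d) : ℝ := znormSq p * p.2.1 j - p.2.2 * p.1 j
noncomputable def Af (ε : ℝ) (j : Fin d) (p : P d) : ℝ := (-(d : ℝ)) * (Nf j p * (Gf ε p)⁻¹)
noncomputable def Bf (ε : ℝ) (j : Fin d) (p : P d) : ℝ := (-(d : ℝ)) * (Mf j p * (Gf ε p)⁻¹)

lemma Gf_pos {ε : ℝ} (hε : 0 < ε) (p : P d) : 0 < Gf ε p := by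
  have h1 : 0 ≤ znormSq p ^ 2 := sq_nonneg _
  have h2 : 0 ≤ p.2.2 ^ 2 := sq_nonneg _
  unfold Gf; linarith

noncomputable def DG (ε : ℝ) (p : P d) : P d →L[ℝ] ℝ :=
  (2 * znormSq p) • DS p + (2 * p.2.2) • LT

lemma hasFDerivAt_Gf (ε : ℝ) (p : P d) : HasFDerivAt (Gf ε) (DG ε p) p := by
  have h1 : HasFDerivAt (fun q : P d => znormSq q ^ 2) ((2 * znormSq p) • DS p) p := by
    have := (hasFDerivAt_znormSq p).mul (hasFDerivAt_znormSq p)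
    simpa [Pi.mul_def, pow_two, two_mul, add_smul] using this
  have h2 : HasFDerivAt (fun q : P d => q.2.2 ^ 2) ((2 * p.2.2) • LT) p := by
    have := ((LT (d := d)).hasFDerivAt (x := p)).mul ((LT (d := d)).hasFDerivAt (x := p))
    simpa [Pi.mul_def, pow_two, two_mul, add_smul] using this
  exact (h1.add h2).add_const ε

noncomputable def DN (j : Fin d) (p : P d) : P d →L[ℝ] ℝ :=
  (znormSq p • LX j + p.1 j • DS p) + (p.2.2 • LY j + p.2.1 j • LT)

lemma hasFDerivAt_Nf (j : Fin d) (p : P d) : HasFDerivAt (Nf j) (DN j p) p :=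
  ((hasFDerivAt_znormSq p).mul ((LX j).hasFDerivAt)).add
    (((LT (d := d)).hasFDerivAt).mul ((LY j).hasFDerivAt))

noncomputable def DM (j : Fin d) (p : P d) : P d →L[ℝ] ℝ :=
  (znormSq p • LY j + p.2.1 j • DS p) - (p.2.2 • LX j + p.1 j • LT)

lemma hasFDerivAt_Mf (j : Fin d) (p : P d) : HasFDerivAt (Mf j) (DM j p) p :=
  ((hasFDerivAt_znormSq p).mul ((LY j).hasFDerivAt)).sub
    (((LT (d := d)).hasFDerivAt).mul ((LX j).hasFDerivAt))

noncomputable def DGi (ε : ℝ) (p : P d) : P d →L[ℝ] ℝ := (-(Gf ε p ^ 2)⁻¹) • DG ε p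

lemma hasFDerivAt_Gfinv {ε : ℝ} (p : P d) (hG : Gf ε p ≠ 0) :
    HasFDerivAt (fun q : P d => (Gf ε q)⁻¹) (DGi ε p) p :=
  (hasDerivAt_inv hG).comp_hasFDerivAt p (hasFDerivAt_Gf ε p)

noncomputable def DA (ε : ℝ) (j : Fin d) (p : P d) : P d →L[ℝ] ℝ :=
  (-(d : ℝ)) • (Nf j p • DGi ε p + (Gf ε p)⁻¹ • DN j p)

lemma hasFDerivAt_Af {ε : ℝ} (j : Fin d) (p : P d) (hG : Gf ε p ≠ 0) :
    HasFDerivAt (Af ε j) (DA ε j p) p :=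
  ((hasFDerivAt_Nf j p).mul (hasFDerivAt_Gfinv p hG)).const_mul (-(d : ℝ))

noncomputable def DB (ε : ℝ) (j : Fin d) (p : P d) : P d →L[ℝ] ℝ :=
  (-(d : ℝ)) • (Mf j p • DGi ε p + (Gf ε p)⁻¹ • DM j p)

lemma hasFDerivAt_Bf {ε : ℝ} (j : Fin d) (p : P d) (hG : Gf ε p ≠ 0) :
    HasFDerivAt (Bf ε j) (DB ε j p) p :=
  ((hasFDerivAt_Mf j p).mul (hasFDerivAt_Gfinv p hG)).const_mul (-(d : ℝ))

lemma Xd_eq {f : P d → ℝ} {D : P d →L[ℝ] ℝ} {p : P d} (h : HasFDerivAt f D p) (j : Fin d) :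
    Xd j f p = D (eX j) + 2 * p.2.1 j * D eT := by
  rw [Xd, h.fderiv]; simp [smul_eq_mul]

lemma Yd_eq {f : P d → ℝ} {D : P d →L[ℝ] ℝ} {p : P d} (h : HasFDerivAt f D p) (j : Fin d) :
    Yd j f p = D (eY j) - 2 * p.1 j * D eT := by
  rw [Yd, h.fderiv]; simp [smul_eq_mul]

-- directional values
@[simp] lemma DG_eX (ε : ℝ) (p : P d) (j : Fin d) :
    DG ε p (eX j) = 4 * znormSq p * p.1 j := by simp [DG]; ring
@[simp] lemma DG_eY (ε : ℝ) (p : P d) (j : Fin d) :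
    DG ε p (eY j) = 4 * znormSq p * p.2.1 j := by simp [DG]; ring
@[simp] lemma DG_eT (ε : ℝ) (p : P d) : DG ε p eT = 2 * p.2.2 := by simp [DG]

@[simp] lemma DN_eX (j : Fin d) (p : P d) :
    DN j p (eX j) = znormSq p + 2 * p.1 j ^ 2 := by
  simp [DN, Pi.single_apply]; ring
@[simp] lemma DN_eT (j : Fin d) (p : P d) : DN j p eT = p.2.1 j := by simp [DN]
@[simp] lemma DM_eY (j : Fin d) (p : P d) :
    DM j p (eY j) = znormSq p + 2 * p.2.1 j ^ 2 := by
  simp [DM, Pi.single_apply]; ring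
@[simp] lemma DM_eT (j : Fin d) (p : P d) : DM j p eT = -p.1 j := by simp [DM]

lemma Xd_Af {ε : ℝ} (j : Fin d) (p : P d) (hG : Gf ε p ≠ 0) :
    Xd j (Af ε j) p =
      -(d : ℝ) * ((znormSq p + 2 * p.1 j ^ 2 + 2 * p.2.1 j ^ 2) * (Gf ε p)⁻¹
        - 4 * Nf j p ^ 2 * ((Gf ε p) ^ 2)⁻¹) := by
  rw [Xd_eq (hasFDerivAt_Af j p hG) j]
  simp only [DA, DGi, ContinuousLinearMap.smul_apply, ContinuousLinearMap.add_apply,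
    smul_eq_mul, DG_eX, DG_eT, DN_eX, DN_eT]
  have hN : Nf j p = znormSq p * p.1 j + p.2.2 * p.2.1 j := rfl
  rw [hN]; ring

lemma Yd_Bf {ε : ℝ} (j : Fin d) (p : P d) (hG : Gf ε p ≠ 0) :
    Yd j (Bf ε j) p =
      -(d : ℝ) * ((znormSq p + 2 * p.1 j ^ 2 + 2 * p.2.1 j ^ 2) * (Gf ε p)⁻¹
        - 4 * Mf j p ^ 2 * ((Gf ε p) ^ 2)⁻¹) := by
  rw [Yd_eq (hasFDerivAt_Bf j p hG) j]
  simp only [DB, DGi, ContinuousLinearMap.smul_apply, ContinuousLinearMap.add_apply,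
    ContinuousLinearMap.sub_apply, smul_eq_mul, DG_eY, DG_eT, DM_eY, DM_eT]
  have hM : Mf j p = znormSq p * p.2.1 j - p.2.2 * p.1 j := rfl
  rw [hM]; ring

end S13
namespace S13
open Heis MeasureTheory

variable {d : ℕ}

lemma znormSq_nonneg (p : P d) : 0 ≤ znormSq p :=
  add_nonneg (Finset.sum_nonneg fun _ _ => sq_nonneg _)
    (Finset.sum_nonneg fun _ _ => sq_nonneg _)

lemma contDiff_Gf (ε : ℝ) : ContDiff ℝ 1 (Gf (d := d) ε) :=
  ((contDiff_znormSq.pow 2).add (((LT (d := d)).contDiff).pow 2)).add contDiff_const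

lemma contDiff_Nf (j : Fin d) : ContDiff ℝ 1 (Nf j) :=
  (contDiff_znormSq.mul (LX j).contDiff).add (((LT (d := d)).contDiff).mul (LY j).contDiff)

lemma contDiff_Mf (j : Fin d) : ContDiff ℝ 1 (Mf j) :=
  (contDiff_znormSq.mul (LY j).contDiff).sub (((LT (d := d)).contDiff).mul (LX j).contDiff)

lemma contDiff_Af {ε : ℝ} (hε : 0 < ε) (j : Fin d) : ContDiff ℝ 1 (Af ε j) :=
  contDiff_const.mul ((contDiff_Nf j).mul
    ((contDiff_Gf ε).inv fun p => (Gf_pos hε p).ne'))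

lemma contDiff_Bf {ε : ℝ} (hε : 0 < ε) (j : Fin d) : ContDiff ℝ 1 (Bf ε j) :=
  contDiff_const.mul ((contDiff_Mf j).mul
    ((contDiff_Gf ε).inv fun p => (Gf_pos hε p).ne'))

lemma sum_sq_xy (p : P d) : ∑ j, (p.1 j ^ 2 + p.2.1 j ^ 2) = znormSq p := by
  rw [znormSq, Finset.sum_add_distrib]

lemma master {ε : ℝ} (hε : 0 < ε) (p : P d) :
    ∑ j, (Xd j (Af ε j) p + Yd j (Bf ε j) p + Af ε j p ^ 2 + Bf ε j p ^ 2)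
      ≤ -((d : ℝ) ^ 2 * (znormSq p / Gf ε p)) := by
  have hG : 0 < Gf ε p := Gf_pos hε p
  set S := znormSq p with hS
  set t := p.2.2 with ht
  set G := Gf ε p with hGdef
  have h1 : ∀ j : Fin d,
      Xd j (Af ε j) p + Yd j (Bf ε j) p + Af ε j p ^ 2 + Bf ε j p ^ 2
        = (-2 * d * G⁻¹) * S
          + ((-4 * d * G⁻¹) + (4 * d + d ^ 2) * (S ^ 2 + t ^ 2) * (G ^ 2)⁻¹)
            * (p.1 j ^ 2 + p.2.1 j ^ 2) := by
    intro j
    rw [Xd_Af j p hG.ne', Yd_Bf j p hG.ne']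
    simp only [Af, Bf, Nf, Mf, ← hS, ← ht, ← hGdef]
    ring
  rw [Finset.sum_congr rfl fun j _ => h1 j]
  rw [Finset.sum_add_distrib, ← Finset.mul_sum, ← Finset.mul_sum,
    sum_sq_xy, Finset.sum_const, Finset.card_univ, Fintype.card_fin, nsmul_eq_mul, ← hS]
  -- now a purely scalar inequality
  have hSnn : 0 ≤ S := znormSq_nonneg p
  have hle : S ^ 2 + t ^ 2 ≤ G := by rw [hGdef, Gf, ← hS, ← ht]; linarith
  have hGinv : 0 < G⁻¹ := inv_pos.mpr hG
  have hGG : G * G⁻¹ = 1 := mul_inv_cancel₀ hG.ne'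
  have hd0 : (0:ℝ) ≤ (d : ℝ) := Nat.cast_nonneg d
  have key : (4 * d + (d:ℝ) ^ 2) * (S ^ 2 + t ^ 2) * (G ^ 2)⁻¹ * S
      ≤ (4 * d + (d:ℝ) ^ 2) * S * G⁻¹ := by
    have h2 : (G ^ 2)⁻¹ = G⁻¹ * G⁻¹ := by rw [pow_two, mul_inv]
    calc (4 * d + (d:ℝ) ^ 2) * (S ^ 2 + t ^ 2) * (G ^ 2)⁻¹ * S
        ≤ (4 * d + (d:ℝ) ^ 2) * G * (G ^ 2)⁻¹ * S := by
          gcongr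
      _ = (4 * d + (d:ℝ) ^ 2) * S * G⁻¹ * (G * G⁻¹) := by rw [h2]; ring
      _ = (4 * d + (d:ℝ) ^ 2) * S * G⁻¹ := by rw [hGG, mul_one]
  rw [div_eq_mul_inv]
  nlinarith [key]
end S13
namespace S13
open Heis MeasureTheory Filter

variable {d : ℕ} {E : Type*} [NormedAddCommGroup E] [NormedSpace ℝ E]

lemma fderiv_apply_continuous {F : P d → E} (hF : ContDiff ℝ 1 F) (v : P d) :
    Continuous fun p => fderiv ℝ F p v := by
  have h := hF.continuous_fderiv one_ne_zero
  exact (ContinuousLinearMap.apply ℝ E v).continuous.comp h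

lemma fderiv_apply_cps {F : P d → E} (hFs : HasCompactSupport F) (v : P d) :
    HasCompactSupport fun p => fderiv ℝ F p v :=
  (hFs.fderiv (𝕜 := ℝ)).comp_left (g := fun L : P d →L[ℝ] E => L v) (by simp)

lemma Xd_continuous {F : P d → E} (hF : ContDiff ℝ 1 F) (j : Fin d) :
    Continuous (Xd j F) := by
  unfold Xd
  exact (fderiv_apply_continuous hF (eX j)).add
    ((continuous_const.mul ((LY j).continuous)).smul (fderiv_apply_continuous hF eT))

lemma Yd_continuous {F : P d → E} (hF : ContDiff ℝ 1 F) (j : Fin d) :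
    Continuous (Yd j F) := by
  unfold Yd
  exact (fderiv_apply_continuous hF (eY j)).sub
    ((continuous_const.mul ((LX j).continuous)).smul (fderiv_apply_continuous hF eT))

lemma Xd_cps {F : P d → E} (hFs : HasCompactSupport F) (j : Fin d) :
    HasCompactSupport (Xd j F) := by
  unfold Xd
  exact (fderiv_apply_cps hFs (eX j)).add ((fderiv_apply_cps hFs eT).smul_left)

lemma Yd_cps {F : P d → E} (hFs : HasCompactSupport F) (j : Fin d) :
    HasCompactSupport (Yd j F) := by
  unfold Yd
  simp only [sub_eq_add_neg, ← neg_smul]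
  exact (fderiv_apply_cps hFs (eY j)).add ((fderiv_apply_cps hFs eT).smul_left)

lemma integral_fderiv_dir {F : P d → ℝ} (hF : ContDiff ℝ 1 F)
    (hFs : HasCompactSupport F) (v : P d) : ∫ p : P d, fderiv ℝ F p v = 0 := by
  obtain ⟨C, hC⟩ := hF.lipschitzWith_of_hasCompactSupport hFs one_ne_zero
  have A := hC.integral_inv_smul_sub_mul_tendsto_integral_lineDeriv_mul'
    (μ := volume) hFs (continuous_const (y := (1:ℝ))) v
  have hzero : (fun t : ℝ => ∫ x : P d, t⁻¹ • (F (x + t • v) - F x) * 1)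
      =ᶠ[nhdsWithin (0:ℝ) (Set.Ioi 0)] fun _ => 0 := by
    filter_upwards [self_mem_nhdsWithin] with t _
    have h1 : Integrable (fun x : P d => F (x + t • v)) := by
      exact (hF.continuous.comp (continuous_add_right (t • v))).integrable_of_hasCompactSupport
        (hFs.comp_homeomorph (Homeomorph.addRight (t • v)))
    have h2 : Integrable F (volume : Measure (P d)) :=
      hF.continuous.integrable_of_hasCompactSupport hFs
    simp only [mul_one, smul_eq_mul]
    rw [integral_const_mul, integral_sub h1 h2, integral_add_right_eq_self F (t • v),
      sub_self, mul_zero]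
  have B : Tendsto (fun t : ℝ => ∫ x : P d, t⁻¹ • (F (x + t • v) - F x) * 1)
      (nhdsWithin (0:ℝ) (Set.Ioi 0)) (nhds 0) := Tendsto.congr' hzero.symm tendsto_const_nhds
  have huniq : (∫ x : P d, lineDeriv ℝ F x v * 1) = 0 := tendsto_nhds_unique A B
  simp only [mul_one] at huniq
  rw [← huniq]
  refine integral_congr_ae (Eventually.of_forall fun p => ?_)
  exact ((hF.differentiable one_ne_zero).differentiableAt.lineDeriv_eq_fderiv).symm

lemma integral_Xd_zero {F : P d → ℝ} (hF : ContDiff ℝ 1 F)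
    (hFs : HasCompactSupport F) (j : Fin d) : ∫ p : P d, Xd j F p = 0 := by
  have h1 : ∫ p : P d, fderiv ℝ F p (eX j) = 0 := integral_fderiv_dir hF hFs _
  have hYF : ContDiff ℝ 1 (fun q : P d => q.2.1 j * F q) := (LY j).contDiff.mul hF
  have hYFs : HasCompactSupport (fun q : P d => q.2.1 j * F q) := hFs.mul_left
  have h2 : ∫ p : P d, fderiv ℝ (fun q : P d => q.2.1 j * F q) p eT = 0 :=
    integral_fderiv_dir hYF hYFs _
  have h3 : ∀ p : P d, fderiv ℝ (fun q : P d => q.2.1 j * F q) p eT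
      = p.2.1 j * fderiv ℝ F p eT := by
    intro p
    have hFp : HasFDerivAt F (fderiv ℝ F p) p :=
      ((hF.differentiable one_ne_zero) p).hasFDerivAt
    have hm : HasFDerivAt (fun q : P d => q.2.1 j * F q)
        (p.2.1 j • fderiv ℝ F p + F p • LY j) p := ((LY j).hasFDerivAt (x := p)).mul hFp
    rw [hm.fderiv]; simp
  have i1 : Integrable (fun p : P d => fderiv ℝ F p (eX j)) :=
    (fderiv_apply_continuous hF _).integrable_of_hasCompactSupport (fderiv_apply_cps hFs _)
  have i2 : Integrable (fun p : P d => p.2.1 j * fderiv ℝ F p eT) :=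
    ((LY j).continuous.mul (fderiv_apply_continuous hF _)).integrable_of_hasCompactSupport
      ((fderiv_apply_cps hFs _).mul_left)
  calc ∫ p : P d, Xd j F p
      = ∫ p : P d, (fderiv ℝ F p (eX j) + 2 * (p.2.1 j * fderiv ℝ F p eT)) := by
        refine integral_congr_ae (Eventually.of_forall fun p => ?_)
        rw [Xd]; simp [smul_eq_mul]; ring
    _ = (∫ p : P d, fderiv ℝ F p (eX j)) + ∫ p : P d, 2 * (p.2.1 j * fderiv ℝ F p eT) :=
        integral_add i1 (i2.const_mul 2)
    _ = 0 := by
        rw [h1, integral_const_mul, zero_add]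
        have : ∫ p : P d, p.2.1 j * fderiv ℝ F p eT = 0 := by
          rw [← h2]
          exact integral_congr_ae (Eventually.of_forall fun p => (h3 p).symm)
        rw [this, mul_zero]

lemma integral_Yd_zero {F : P d → ℝ} (hF : ContDiff ℝ 1 F)
    (hFs : HasCompactSupport F) (j : Fin d) : ∫ p : P d, Yd j F p = 0 := by
  have h1 : ∫ p : P d, fderiv ℝ F p (eY j) = 0 := integral_fderiv_dir hF hFs _
  have hXF : ContDiff ℝ 1 (fun q : P d => q.1 j * F q) := (LX j).contDiff.mul hF
  have hXFs : HasCompactSupport (fun q : P d => q.1 j * F q) := hFs.mul_left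
  have h2 : ∫ p : P d, fderiv ℝ (fun q : P d => q.1 j * F q) p eT = 0 :=
    integral_fderiv_dir hXF hXFs _
  have h3 : ∀ p : P d, fderiv ℝ (fun q : P d => q.1 j * F q) p eT
      = p.1 j * fderiv ℝ F p eT := by
    intro p
    have hFp : HasFDerivAt F (fderiv ℝ F p) p :=
      ((hF.differentiable one_ne_zero) p).hasFDerivAt
    have hm : HasFDerivAt (fun q : P d => q.1 j * F q)
        (p.1 j • fderiv ℝ F p + F p • LX j) p := ((LX j).hasFDerivAt (x := p)).mul hFp
    rw [hm.fderiv]; simp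
  have i1 : Integrable (fun p : P d => fderiv ℝ F p (eY j)) :=
    (fderiv_apply_continuous hF _).integrable_of_hasCompactSupport (fderiv_apply_cps hFs _)
  have i2 : Integrable (fun p : P d => p.1 j * fderiv ℝ F p eT) :=
    ((LX j).continuous.mul (fderiv_apply_continuous hF _)).integrable_of_hasCompactSupport
      ((fderiv_apply_cps hFs _).mul_left)
  calc ∫ p : P d, Yd j F p
      = ∫ p : P d, (fderiv ℝ F p (eY j) - 2 * (p.1 j * fderiv ℝ F p eT)) := by
        refine integral_congr_ae (Eventually.of_forall fun p => ?_)
        rw [Yd]; simp [smul_eq_mul]; ring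
    _ = (∫ p : P d, fderiv ℝ F p (eY j)) - ∫ p : P d, 2 * (p.1 j * fderiv ℝ F p eT) :=
        integral_sub i1 (i2.const_mul 2)
    _ = 0 := by
        rw [h1, integral_const_mul, zero_sub]
        have : ∫ p : P d, p.1 j * fderiv ℝ F p eT = 0 := by
          rw [← h2]
          exact integral_congr_ae (Eventually.of_forall fun p => (h3 p).symm)
        rw [this, mul_zero, neg_zero]

end S13
namespace S13
open Heis MeasureTheory Filter

variable {d : ℕ}

lemma norm_sq_complex (z : ℂ) : ‖z‖ ^ 2 = z.re ^ 2 + z.im ^ 2 := by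
  have h : ‖z‖ ^ 2 = Complex.normSq z := by
    rw [Complex.sq_norm]
  rw [h, Complex.normSq_apply]; ring

noncomputable def nf (u : P d → ℂ) (p : P d) : ℝ := ‖u p‖ ^ 2

lemma nf_eq (u : P d → ℂ) (p : P d) : nf u p = (u p).re ^ 2 + (u p).im ^ 2 :=
  norm_sq_complex (u p)

lemma contDiff_nf {u : P d → ℂ} (hu : ContDiff ℝ 1 u) : ContDiff ℝ 1 (nf u) := by
  have h : nf u = fun p => (Complex.reCLM (u p)) ^ 2 + (Complex.imCLM (u p)) ^ 2 := by
    funext p; exact nf_eq u p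
  rw [h]
  exact ((Complex.reCLM.contDiff.comp hu).pow 2).add ((Complex.imCLM.contDiff.comp hu).pow 2)

lemma nf_cps {u : P d → ℂ} (hs : HasCompactSupport u) : HasCompactSupport (nf u) :=
  hs.comp_left (g := fun z : ℂ => ‖z‖ ^ 2) (by simp)

lemma hasFDerivAt_nf {u : P d → ℂ} (hu : ContDiff ℝ 1 u) (p : P d) :
    HasFDerivAt (nf u)
      ((2 * (u p).re) • (Complex.reCLM.comp (fderiv ℝ u p))
        + (2 * (u p).im) • (Complex.imCLM.comp (fderiv ℝ u p))) p := by
  have hup : HasFDerivAt u (fderiv ℝ u p) p := ((hu.differentiable one_ne_zero) p).hasFDerivAt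
  have hre : HasFDerivAt (fun q : P d => (u q).re)
      (Complex.reCLM.comp (fderiv ℝ u p)) p := (Complex.reCLM.hasFDerivAt).comp p hup
  have him : HasFDerivAt (fun q : P d => (u q).im)
      (Complex.imCLM.comp (fderiv ℝ u p)) p := (Complex.imCLM.hasFDerivAt).comp p hup
  have h1 : HasFDerivAt (fun q : P d => (u q).re ^ 2)
      ((2 * (u p).re) • (Complex.reCLM.comp (fderiv ℝ u p))) p := by
    simpa [Pi.mul_def, pow_two, two_mul, add_smul] using hre.mul hre
  have h2 : HasFDerivAt (fun q : P d => (u q).im ^ 2)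
      ((2 * (u p).im) • (Complex.imCLM.comp (fderiv ℝ u p))) p := by
    simpa [Pi.mul_def, pow_two, two_mul, add_smul] using him.mul him
  have h : nf u = fun p => (u p).re ^ 2 + (u p).im ^ 2 := by funext q; exact nf_eq u q
  rw [h]
  exact h1.add h2

lemma Xd_nf {u : P d → ℂ} (hu : ContDiff ℝ 1 u) (j : Fin d) (p : P d) :
    Xd j (nf u) p = 2 * ((u p).re * (Xd j u p).re + (u p).im * (Xd j u p).im) := by
  rw [Xd_eq (hasFDerivAt_nf hu p) j, Xd]
  simp only [ContinuousLinearMap.add_apply, ContinuousLinearMap.smul_apply,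
    ContinuousLinearMap.coe_comp', Function.comp_apply, Complex.reCLM_apply,
    Complex.imCLM_apply, smul_eq_mul, Complex.add_re, Complex.add_im,
    Complex.smul_re, Complex.smul_im]
  ring

lemma Yd_nf {u : P d → ℂ} (hu : ContDiff ℝ 1 u) (j : Fin d) (p : P d) :
    Yd j (nf u) p = 2 * ((u p).re * (Yd j u p).re + (u p).im * (Yd j u p).im) := by
  rw [Yd_eq (hasFDerivAt_nf hu p) j, Yd]
  simp only [ContinuousLinearMap.add_apply, ContinuousLinearMap.smul_apply,
    ContinuousLinearMap.coe_comp', Function.comp_apply, Complex.reCLM_apply,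
    Complex.imCLM_apply, smul_eq_mul, Complex.sub_re, Complex.sub_im,
    Complex.smul_re, Complex.smul_im]
  ring

lemma W_le {u : P d → ℂ} (hu : ContDiff ℝ 1 u) (ε : ℝ) (j : Fin d) (p : P d) :
    Af ε j p * Xd j (nf u) p + Bf ε j p * Yd j (nf u) p
      - (Af ε j p ^ 2 + Bf ε j p ^ 2) * nf u p
      ≤ ‖Xd j u p‖ ^ 2 + ‖Yd j u p‖ ^ 2 := by
  rw [Xd_nf hu, Yd_nf hu, nf_eq, norm_sq_complex, norm_sq_complex]
  nlinarith [sq_nonneg ((Xd j u p).re - Af ε j p * (u p).re),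
    sq_nonneg ((Xd j u p).im - Af ε j p * (u p).im),
    sq_nonneg ((Yd j u p).re - Bf ε j p * (u p).re),
    sq_nonneg ((Yd j u p).im - Bf ε j p * (u p).im)]

lemma Xd_mul {f g : P d → ℝ} (hf : ContDiff ℝ 1 f) (hg : ContDiff ℝ 1 g) (j : Fin d)
    (p : P d) : Xd j (fun q => f q * g q) p = Xd j f p * g p + f p * Xd j g p := by
  have hfp : HasFDerivAt f (fderiv ℝ f p) p := ((hf.differentiable one_ne_zero) p).hasFDerivAt
  have hgp : HasFDerivAt g (fderiv ℝ g p) p := ((hg.differentiable one_ne_zero) p).hasFDerivAt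
  rw [Xd_eq (hfp.fun_mul hgp) j, Xd, Xd]
  simp only [ContinuousLinearMap.add_apply, ContinuousLinearMap.smul_apply, smul_eq_mul]
  ring

lemma Yd_mul {f g : P d → ℝ} (hf : ContDiff ℝ 1 f) (hg : ContDiff ℝ 1 g) (j : Fin d)
    (p : P d) : Yd j (fun q => f q * g q) p = Yd j f p * g p + f p * Yd j g p := by
  have hfp : HasFDerivAt f (fderiv ℝ f p) p := ((hf.differentiable one_ne_zero) p).hasFDerivAt
  have hgp : HasFDerivAt g (fderiv ℝ g p) p := ((hg.differentiable one_ne_zero) p).hasFDerivAt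
  rw [Yd_eq (hfp.fun_mul hgp) j, Yd, Yd]
  simp only [ContinuousLinearMap.add_apply, ContinuousLinearMap.smul_apply, smul_eq_mul]
  ring

end S13
namespace S13
open Heis MeasureTheory Filter

variable {d : ℕ}

lemma core {u : P d → ℂ} (hu : ContDiff ℝ 1 u) (hs : HasCompactSupport u)
    {ε : ℝ} (hε : 0 < ε) :
    (d : ℝ) ^ 2 * ∫ p : P d, znormSq p / Gf ε p * nf u p ≤ ∫ p : P d, gradHSq u p := by
  have hGne : ∀ p : P d, Gf ε p ≠ 0 := fun p => (Gf_pos hε p).ne'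
  have hn : ContDiff ℝ 1 (nf u) := contDiff_nf hu
  have hns : HasCompactSupport (nf u) := nf_cps hs
  have hA : ∀ j : Fin d, ContDiff ℝ 1 (Af ε j) := fun j => contDiff_Af hε j
  have hB : ∀ j : Fin d, ContDiff ℝ 1 (Bf ε j) := fun j => contDiff_Bf hε j
  have hn0 : ∀ p, 0 ≤ nf u p := fun p => by rw [nf]; positivity
  -- the three families of integrands
  set W : Fin d → P d → ℝ := fun j p =>
    Af ε j p * Xd j (nf u) p + Bf ε j p * Yd j (nf u) p
      - (Af ε j p ^ 2 + Bf ε j p ^ 2) * nf u p with hW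
  set Ψ : Fin d → P d → ℝ := fun j p =>
    Xd j (fun q => Af ε j q * nf u q) p + Yd j (fun q => Bf ε j q * nf u q) p with hΨ
  -- integrability
  have iW : ∀ j : Fin d, Integrable (W j) := by
    intro j
    refine Integrable.sub (Integrable.add ?_ ?_) ?_
    · exact ((hA j).continuous.mul (Xd_continuous hn j)).integrable_of_hasCompactSupport
        ((Xd_cps hns j).mul_left)
    · exact ((hB j).continuous.mul (Yd_continuous hn j)).integrable_of_hasCompactSupport
        ((Yd_cps hns j).mul_left)
    · exact ((((hA j).continuous.pow 2).add ((hB j).continuous.pow 2)).mul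
        hn.continuous).integrable_of_hasCompactSupport hns.mul_left
  have iΨ1 : ∀ j, Integrable (fun p : P d => Xd j (fun q => Af ε j q * nf u q) p) :=
    fun j => (Xd_continuous ((hA j).mul hn) j).integrable_of_hasCompactSupport
      (Xd_cps hns.mul_left j)
  have iΨ2 : ∀ j, Integrable (fun p : P d => Yd j (fun q => Bf ε j q * nf u q) p) :=
    fun j => (Yd_continuous ((hB j).mul hn) j).integrable_of_hasCompactSupport
      (Yd_cps hns.mul_left j)
  have iΨ : ∀ j : Fin d, Integrable (Ψ j) := fun j => (iΨ1 j).add (iΨ2 j)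
  have hΨ0 : ∀ j : Fin d, ∫ p : P d, Ψ j p = 0 := by
    intro j
    rw [hΨ]
    rw [integral_add (iΨ1 j) (iΨ2 j),
      integral_Xd_zero ((hA j).mul hn) hns.mul_left j,
      integral_Yd_zero ((hB j).mul hn) hns.mul_left j, add_zero]
  have iXY : ∀ j : Fin d, Integrable (fun p : P d => ‖Xd j u p‖ ^ 2 + ‖Yd j u p‖ ^ 2) := by
    intro j
    refine Integrable.add ?_ ?_
    · exact (((Xd_continuous hu j).norm).pow 2).integrable_of_hasCompactSupport
        (((Xd_cps hs j).norm).comp_left (g := fun x : ℝ => x ^ 2) (by simp) :)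
    · exact (((Yd_continuous hu j).norm).pow 2).integrable_of_hasCompactSupport
        (((Yd_cps hs j).norm).comp_left (g := fun x : ℝ => x ^ 2) (by simp) :)
  have iL : Integrable (fun p : P d => znormSq p / Gf ε p * nf u p) := by
    refine Continuous.integrable_of_hasCompactSupport ?_ hns.mul_left
    exact (contDiff_znormSq.continuous.div (contDiff_Gf ε).continuous hGne).mul hn.continuous
  -- pointwise identity: q_j * n = Ψ_j - W_j
  have hq : ∀ p (j : Fin d),
      (Xd j (Af ε j) p + Yd j (Bf ε j) p + Af ε j p ^ 2 + Bf ε j p ^ 2) * nf u p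
        = Ψ j p - W j p := by
    intro p j
    have h1 := Xd_mul (hA j) hn j p
    have h2 := Yd_mul (hB j) hn j p
    rw [hΨ, hW]
    dsimp only
    rw [h1, h2]
    ring
  -- step 1 : pointwise bound
  have step1 : ∀ p : P d, (d : ℝ) ^ 2 * (znormSq p / Gf ε p * nf u p)
      ≤ ∑ j, (W j p - Ψ j p) := by
    intro p
    have hm := mul_le_mul_of_nonneg_right (master hε p) (hn0 p)
    rw [Finset.sum_mul] at hm
    rw [Finset.sum_congr rfl fun j _ => hq p j] at hm
    have h4 : ∑ j, (W j p - Ψ j p) = -∑ j, (Ψ j p - W j p) := by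
      rw [← Finset.sum_neg_distrib]
      exact Finset.sum_congr rfl fun j _ => by ring
    rw [h4]
    nlinarith [hm]
  -- integrate
  calc (d : ℝ) ^ 2 * ∫ p : P d, znormSq p / Gf ε p * nf u p
      = ∫ p : P d, (d : ℝ) ^ 2 * (znormSq p / Gf ε p * nf u p) := (integral_const_mul _ _).symm
    _ ≤ ∫ p : P d, ∑ j, (W j p - Ψ j p) := by
        refine integral_mono (iL.const_mul _) ?_ step1
        exact integrable_finset_sum _ fun j _ => (iW j).sub (iΨ j)
    _ = ∑ j, ∫ p : P d, (W j p - Ψ j p) := integral_finset_sum _ fun j _ => (iW j).sub (iΨ j)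
    _ = ∑ j, ∫ p : P d, W j p := by
        refine Finset.sum_congr rfl fun j _ => ?_
        rw [integral_sub (iW j) (iΨ j), hΨ0 j, sub_zero]
    _ ≤ ∑ j, ∫ p : P d, (‖Xd j u p‖ ^ 2 + ‖Yd j u p‖ ^ 2) := by
        refine Finset.sum_le_sum fun j _ => integral_mono (iW j) (iXY j) ?_
        intro p
        exact W_le hu ε j p
    _ = ∫ p : P d, gradHSq u p := by
        rw [← integral_finset_sum _ fun j _ => iXY j]
        rfl
end S13
open S13 MeasureTheory Filter

open Heis in
/-- the Garofalo–Lanconelli Hardy inequality on the Heisenberg group. -/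
theorem stmt13 {d : ℕ} (hd : 1 ≤ d)
    (u : P d → ℂ) (hu : ContDiff ℝ (⊤ : ℕ∞) u) (hsupp : HasCompactSupport u) :
    ∫⁻ p : P d, ENNReal.ofReal (znormSq p / koranyi p ^ 4 * ‖u p‖ ^ 2)
      ≤ ENNReal.ofReal (1 / (d : ℝ) ^ 2) *
        ∫⁻ p : P d, ENNReal.ofReal (gradHSq u p) := by
  have hu1 : ContDiff ℝ 1 u := hu.of_le (by simp)
  have hd2 : (0 : ℝ) < (d : ℝ) ^ 2 := by
    have : (1 : ℝ) ≤ (d : ℝ) := by exact_mod_cast hd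
    positivity
  -- the right-hand side real integral
  have hgrad_eq : gradHSq u = fun p : P d => ∑ j, (‖Xd j u p‖ ^ 2 + ‖Yd j u p‖ ^ 2) := rfl
  have igrad : Integrable (gradHSq u) (volume : Measure (P d)) := by
    rw [hgrad_eq]
    refine integrable_finset_sum _ fun j _ => Integrable.add ?_ ?_
    · exact (((Xd_continuous hu1 j).norm).pow 2).integrable_of_hasCompactSupport
        (((Xd_cps hsupp j).norm).comp_left (g := fun x : ℝ => x ^ 2) (by simp) :)
    · exact (((Yd_continuous hu1 j).norm).pow 2).integrable_of_hasCompactSupport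
        (((Yd_cps hsupp j).norm).comp_left (g := fun x : ℝ => x ^ 2) (by simp) :)
  have hgrad_nn : ∀ p : P d, 0 ≤ gradHSq u p := fun p =>
    Finset.sum_nonneg fun j _ => add_nonneg (sq_nonneg _) (sq_nonneg _)
  have hRHS : ∫⁻ p : P d, ENNReal.ofReal (gradHSq u p)
      = ENNReal.ofReal (∫ p : P d, gradHSq u p) :=
    (ofReal_integral_eq_lintegral_ofReal igrad (Eventually.of_forall hgrad_nn)).symm
  -- rewrite the Koranyi weight
  have hkor : ∀ p : P d, znormSq p / koranyi p ^ 4 * ‖u p‖ ^ 2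
      = znormSq p / (znormSq p ^ 2 + p.2.2 ^ 2) * nf u p := by
    intro p
    have hx : (0 : ℝ) ≤ znormSq p ^ 2 + p.2.2 ^ 2 := by positivity
    have h4 : koranyi p ^ 4 = znormSq p ^ 2 + p.2.2 ^ 2 := by
      rw [koranyi, ← Real.rpow_natCast ((znormSq p ^ 2 + p.2.2 ^ 2) ^ ((1:ℝ)/4)) 4,
        ← Real.rpow_mul hx]
      norm_num
    rw [h4, nf]
  -- the approximating family
  set f : ℕ → P d → ENNReal := fun k p =>
    ENNReal.ofReal (znormSq p / Gf (1 / ((k : ℝ) + 1)) p * nf u p) with hf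
  have hεpos : ∀ k : ℕ, (0 : ℝ) < 1 / ((k : ℝ) + 1) := fun k => by positivity
  have hmono : Monotone f := by
    intro k l hkl
    intro p
    refine ENNReal.ofReal_le_ofReal ?_
    have h1 : Gf (1 / ((l : ℝ) + 1)) p ≤ Gf (1 / ((k : ℝ) + 1)) p := by
      unfold Gf
      have : 1 / ((l : ℝ) + 1) ≤ 1 / ((k : ℝ) + 1) := by
        apply one_div_le_one_div_of_le (by positivity)
        have : (k : ℝ) ≤ (l : ℝ) := by exact_mod_cast hkl
        linarith
      linarith
    refine mul_le_mul_of_nonneg_right ?_ (by rw [nf]; positivity)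
    exact div_le_div_of_nonneg_left (znormSq_nonneg p) (Gf_pos (hεpos l) p) h1
  have hsup : ∀ p : P d, (⨆ k, f k p)
      = ENNReal.ofReal (znormSq p / (znormSq p ^ 2 + p.2.2 ^ 2) * nf u p) := by
    intro p
    have hmp : Monotone fun k => f k p := fun k l hkl => hmono hkl p
    refine tendsto_nhds_unique (tendsto_atTop_iSup hmp) ?_
    refine (ENNReal.continuous_ofReal.tendsto _).comp ?_
    by_cases hS : znormSq p = 0
    · have : ∀ k : ℕ, znormSq p / Gf (1 / ((k : ℝ) + 1)) p * nf u p = 0 := by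
        intro k; rw [hS, zero_div, zero_mul]
      rw [funext this]  -- ?
      rw [hS, zero_div, zero_mul]
      exact tendsto_const_nhds
    · have hSpos : 0 < znormSq p := lt_of_le_of_ne (znormSq_nonneg p) (Ne.symm hS)
      have hden : 0 < znormSq p ^ 2 + p.2.2 ^ 2 := by positivity
      have hG : Tendsto (fun k : ℕ => Gf (1 / ((k : ℝ) + 1)) p) atTop
          (nhds (znormSq p ^ 2 + p.2.2 ^ 2)) := by
        have := tendsto_one_div_add_atTop_nhds_zero_nat (𝕜 := ℝ)
        have h' := (tendsto_const_nhds :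
          Tendsto (fun _ : ℕ => znormSq p ^ 2 + p.2.2 ^ 2) atTop _).add this
        simpa [Gf] using h'
      exact (tendsto_const_nhds.div hG hden.ne').mul tendsto_const_nhds
  -- main estimate for each k
  have hbound : ∀ k : ℕ, ∫⁻ p : P d, f k p
      ≤ ENNReal.ofReal (1 / (d : ℝ) ^ 2) * ∫⁻ p : P d, ENNReal.ofReal (gradHSq u p) := by
    intro k
    have hεk := hεpos k
    have iL : Integrable (fun p : P d => znormSq p / Gf (1 / ((k : ℝ) + 1)) p * nf u p) := by
      refine Continuous.integrable_of_hasCompactSupport ?_ ((nf_cps hsupp).mul_left)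
      exact (contDiff_znormSq.continuous.div (contDiff_Gf _).continuous
        (fun p => (Gf_pos hεk p).ne')).mul (contDiff_nf hu1).continuous
    have hLnn : ∀ p : P d, 0 ≤ znormSq p / Gf (1 / ((k : ℝ) + 1)) p * nf u p := by
      intro p
      have := Gf_pos hεk p
      have := znormSq_nonneg p
      have : (0:ℝ) ≤ nf u p := by rw [nf]; positivity
      positivity
    have h1 : ∫⁻ p : P d, f k p
        = ENNReal.ofReal (∫ p : P d, znormSq p / Gf (1 / ((k : ℝ) + 1)) p * nf u p) :=
      (ofReal_integral_eq_lintegral_ofReal iL (Eventually.of_forall hLnn)).symm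
    rw [h1, hRHS, ← ENNReal.ofReal_mul (by positivity)]
    refine ENNReal.ofReal_le_ofReal ?_
    have hcore := core hu1 hsupp hεk
    have hI : ∫ p : P d, znormSq p / Gf (1 / ((k : ℝ) + 1)) p * nf u p
        = (1 / (d : ℝ) ^ 2) * ((d : ℝ) ^ 2 * ∫ p : P d, znormSq p / Gf (1 / ((k : ℝ) + 1)) p * nf u p) := by
      field_simp
    rw [hI]
    exact mul_le_mul_of_nonneg_left hcore (by positivity)
  -- put everything together
  calc ∫⁻ p : P d, ENNReal.ofReal (znormSq p / koranyi p ^ 4 * ‖u p‖ ^ 2)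
      = ∫⁻ p : P d, ⨆ k, f k p := by
        refine lintegral_congr fun p => ?_
        rw [hkor p, ← hsup p]
    _ = ⨆ k, ∫⁻ p : P d, f k p := by
        refine lintegral_iSup (fun k => ?_) hmono
        refine Measurable.ennreal_ofReal ?_
        refine Continuous.measurable ?_
        exact ((contDiff_znormSq.continuous.div (contDiff_Gf _).continuous
          (fun p => (Gf_pos (hεpos k) p).ne')).mul (contDiff_nf hu1).continuous)
    _ ≤ ENNReal.ofReal (1 / (d : ℝ) ^ 2) * ∫⁻ p : P d, ENNReal.ofReal (gradHSq u p) :=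
        iSup_le hbound
end

section
/- (Horizontal Hardy inequality.) Let d ≥ 2 be an integer. For every smooth compactly supported f : ℝ^{2d}×ℝ → ℂ, ∫ |f(z,t)|²/|z|² dz dt ≤ (1/(d−1))² ∫ |∇_H f(z,t)|² dz dt. -/
open MeasureTheory Real Set
open scoped ENNReal NNReal BigOperators

noncomputable section
namespace Stmt15Aux
open Heis

instance haarPR : MeasureTheory.Measure.IsAddHaarMeasure
    (volume : MeasureTheory.Measure ((Fin d → ℝ) × ℝ)) :=
  MeasureTheory.Measure.prod.instIsAddHaarMeasure _ _

instance haarP : MeasureTheory.Measure.IsAddHaarMeasure (volume : MeasureTheory.Measure (P d)) :=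
  MeasureTheory.Measure.prod.instIsAddHaarMeasure _ _

variable {d : ℕ}

/-- coordinate CLM `p ↦ p.1 j` -/
def L1 (j : Fin d) : P d →L[ℝ] ℝ :=
  (ContinuousLinearMap.proj j).comp (ContinuousLinearMap.fst ℝ (Fin d → ℝ) ((Fin d → ℝ) × ℝ))

/-- coordinate CLM `p ↦ p.2.1 j` -/
def L2 (j : Fin d) : P d →L[ℝ] ℝ :=
  ((ContinuousLinearMap.proj j).comp (ContinuousLinearMap.fst ℝ (Fin d → ℝ) ℝ)).comp
    (ContinuousLinearMap.snd ℝ (Fin d → ℝ) ((Fin d → ℝ) × ℝ))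

@[simp] lemma L1_apply (j : Fin d) (v : P d) : L1 j v = v.1 j := rfl
@[simp] lemma L2_apply (j : Fin d) (v : P d) : L2 j v = v.2.1 j := rfl

/-- derivative of `znormSq` at `p` -/
def Dq (p : P d) : P d →L[ℝ] ℝ := (∑ j, (2 * p.1 j) • L1 j) + ∑ j, (2 * p.2.1 j) • L2 j

lemma Dq_apply (p v : P d) :
    Dq p v = (∑ j, 2 * p.1 j * v.1 j) + ∑ j, 2 * p.2.1 j * v.2.1 j := by
  simp [Dq, mul_assoc]

lemma hasFDerivAt_znormSq (p : P d) : HasFDerivAt znormSq (Dq p) p := by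
  have h1 : ∀ j : Fin d, HasFDerivAt (fun q : P d => q.1 j * q.1 j)
      (p.1 j • L1 j + p.1 j • L1 j) p := by
    intro j
    exact ((L1 (d := d) j).hasFDerivAt (x := p)).mul ((L1 j).hasFDerivAt (x := p))
  have h2 : ∀ j : Fin d, HasFDerivAt (fun q : P d => q.2.1 j * q.2.1 j)
      (p.2.1 j • L2 j + p.2.1 j • L2 j) p := by
    intro j
    exact ((L2 (d := d) j).hasFDerivAt (x := p)).mul ((L2 j).hasFDerivAt (x := p))
  have hfun : znormSq (d := d) =
      fun q => (∑ j, q.1 j * q.1 j) + ∑ j, q.2.1 j * q.2.1 j := by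
    funext q; simp [znormSq, pow_two]
  rw [hfun]
  have h := (HasFDerivAt.sum (fun j (_ : j ∈ Finset.univ) => h1 j)).add
    (HasFDerivAt.sum (fun j (_ : j ∈ Finset.univ) => h2 j))
  have e1 : ∀ (c : ℝ) (L : P d →L[ℝ] ℝ), (2 * c) • L = c • L + c • L := fun c L => by
    rw [two_mul, add_smul]
  unfold Dq
  simp only [e1]
  exact h.congr_of_eventuallyEq (Filter.Eventually.of_forall fun q => by simp [Finset.sum_apply])

lemma Dq_eX (p : P d) (i : Fin d) : Dq p (eX i) = 2 * p.1 i := by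
  simp [Dq_apply, eX, Pi.single_apply, mul_ite, Finset.sum_ite_eq']

lemma Dq_eY (p : P d) (i : Fin d) : Dq p (eY i) = 2 * p.2.1 i := by
  simp [Dq_apply, eY, Pi.single_apply, mul_ite, Finset.sum_ite_eq']

lemma Dq_eT (p : P d) : Dq p (eT : P d) = 0 := by
  simp [Dq_apply, eT]

lemma znormSq_nonneg (p : P d) : 0 ≤ znormSq p := by
  have : (0:ℝ) ≤ ∑ j, p.1 j ^ 2 := Finset.sum_nonneg fun j _ => sq_nonneg _
  have : (0:ℝ) ≤ ∑ j, p.2.1 j ^ 2 := Finset.sum_nonneg fun j _ => sq_nonneg _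
  unfold znormSq; linarith [Finset.sum_nonneg (fun j (_ : j ∈ Finset.univ) => sq_nonneg (p.1 j))]

lemma contDiff_znormSq : ContDiff ℝ 1 (znormSq (d := d)) := by
  have hfun : znormSq (d := d) = fun q => (∑ j, (L1 j q) ^ 2) + ∑ j, (L2 j q) ^ 2 := rfl
  rw [hfun]
  exact (ContDiff.sum fun j _ => ((L1 j).contDiff).pow 2).add
    (ContDiff.sum fun j _ => ((L2 j).contDiff).pow 2)

/-- regularized `|z|² + ε` -/
def mu (ε : ℝ) (p : P d) : ℝ := znormSq p + ε

lemma mu_pos {ε : ℝ} (hε : 0 < ε) (p : P d) : 0 < mu ε p := by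
  have := znormSq_nonneg p; unfold mu; linarith

lemma contDiff_mu (ε : ℝ) : ContDiff ℝ 1 (mu (d := d) ε) :=
  contDiff_znormSq.add contDiff_const

lemma hasFDerivAt_mu (ε : ℝ) (p : P d) : HasFDerivAt (mu ε) (Dq p) p :=
  (hasFDerivAt_znormSq p).add_const ε


lemma hasFDerivAt_w1 {ε : ℝ} (hε : 0 < ε) (j : Fin d) (p : P d) :
    HasFDerivAt (fun q : P d => q.1 j / mu ε q)
      (p.1 j • ((-((mu ε p) ^ 2)⁻¹) • Dq p) + (mu ε p)⁻¹ • L1 j) p := by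
  have hinv : HasFDerivAt (fun q : P d => (mu ε q)⁻¹) ((-((mu ε p) ^ 2)⁻¹) • Dq p) p :=
    (hasDerivAt_inv (mu_pos hε p).ne').comp_hasFDerivAt p (hasFDerivAt_mu ε p)
  have h := ((L1 (d := d) j).hasFDerivAt (x := p)).mul hinv
  simp only [div_eq_mul_inv]
  exact h

lemma hasFDerivAt_w2 {ε : ℝ} (hε : 0 < ε) (j : Fin d) (p : P d) :
    HasFDerivAt (fun q : P d => q.2.1 j / mu ε q)
      (p.2.1 j • ((-((mu ε p) ^ 2)⁻¹) • Dq p) + (mu ε p)⁻¹ • L2 j) p := by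
  have hinv : HasFDerivAt (fun q : P d => (mu ε q)⁻¹) ((-((mu ε p) ^ 2)⁻¹) • Dq p) p :=
    (hasDerivAt_inv (mu_pos hε p).ne').comp_hasFDerivAt p (hasFDerivAt_mu ε p)
  have h := ((L2 (d := d) j).hasFDerivAt (x := p)).mul hinv
  simp only [div_eq_mul_inv]
  exact h

lemma fderiv_w1_self {ε : ℝ} (hε : 0 < ε) (j : Fin d) (p : P d) :
    fderiv ℝ (fun q : P d => q.1 j / mu ε q) p (eX j)
      = (mu ε p - 2 * p.1 j ^ 2) / mu ε p ^ 2 := by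
  rw [(hasFDerivAt_w1 hε j p).fderiv]
  have hne : mu ε p ≠ 0 := (mu_pos hε p).ne'
  have e1 : (eX j : P d).1 j = 1 := by simp [eX]
  simp only [ContinuousLinearMap.add_apply, ContinuousLinearMap.smul_apply, smul_eq_mul,
    Dq_eX, L1_apply, e1]
  field_simp
  ring

lemma fderiv_w2_self {ε : ℝ} (hε : 0 < ε) (j : Fin d) (p : P d) :
    fderiv ℝ (fun q : P d => q.2.1 j / mu ε q) p (eY j)
      = (mu ε p - 2 * p.2.1 j ^ 2) / mu ε p ^ 2 := by
  rw [(hasFDerivAt_w2 hε j p).fderiv]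
  have hne : mu ε p ≠ 0 := (mu_pos hε p).ne'
  have e1 : (eY j : P d).2.1 j = 1 := by simp [eY]
  simp only [ContinuousLinearMap.add_apply, ContinuousLinearMap.smul_apply, smul_eq_mul,
    Dq_eY, L2_apply, e1]
  field_simp
  ring

lemma contDiff_w1 {ε : ℝ} (hε : 0 < ε) (j : Fin d) :
    ContDiff ℝ 1 (fun p : P d => p.1 j / mu ε p) :=
  ((L1 j).contDiff).div (contDiff_mu ε) fun p => (mu_pos hε p).ne'

lemma contDiff_w2 {ε : ℝ} (hε : 0 < ε) (j : Fin d) :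
    ContDiff ℝ 1 (fun p : P d => p.2.1 j / mu ε p) :=
  ((L2 j).contDiff).div (contDiff_mu ε) fun p => (mu_pos hε p).ne'

/-- Integration by parts on `P d`. -/
lemma ibp (u w : P d → ℝ) (hu : ContDiff ℝ 1 u) (hsu : HasCompactSupport u)
    (hw : ContDiff ℝ 1 w) (v : P d) :
    ∫ p : P d, (fderiv ℝ u p v * w p + u p * fderiv ℝ w p v) = 0 := by
  have hg : ContDiff ℝ 1 (fun p : P d => u p * w p) := hu.mul hw
  have hgs : HasCompactSupport (fun p : P d => u p * w p) := hsu.mul_right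
  obtain ⟨C, hC⟩ := hg.lipschitzWith_of_hasCompactSupport hgs one_ne_zero
  have key := LipschitzWith.integral_lineDeriv_mul_eq (μ := volume)
    (LipschitzWith.const (1 : ℝ)) hC hgs (-v)
  have h0 : ∀ x : P d, lineDeriv ℝ (fun _ : P d => (1:ℝ)) x (-v) = 0 := fun x => by
    simp [lineDeriv]
  simp only [h0, zero_mul, MeasureTheory.integral_zero, neg_neg, mul_one] at key
  have h1 : ∀ x : P d, lineDeriv ℝ (fun p : P d => u p * w p) x v
      = fderiv ℝ u x v * w x + u x * fderiv ℝ w x v := by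
    intro x
    rw [DifferentiableAt.lineDeriv_eq_fderiv (hg.differentiable one_ne_zero x)]
    rw [fderiv_fun_mul (hu.differentiable one_ne_zero x) (hw.differentiable one_ne_zero x)]
    simp only [ContinuousLinearMap.add_apply, ContinuousLinearMap.smul_apply, smul_eq_mul]
    ring
  simp only [h1] at key
  exact key.symm

/-- `|f|²` written with re/im. -/
def uu (f : P d → ℂ) (p : P d) : ℝ := (f p).re ^ 2 + (f p).im ^ 2

lemma uu_eq (f : P d → ℂ) (p : P d) : uu f p = ‖f p‖ ^ 2 := by
  rw [uu, Complex.sq_norm, Complex.normSq_apply]; ring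

lemma uu_nonneg (f : P d → ℂ) (p : P d) : 0 ≤ uu f p := by
  unfold uu; positivity

lemma contDiff_uu (f : P d → ℂ) (hf : ContDiff ℝ (⊤ : ℕ∞) f) : ContDiff ℝ 1 (uu f) := by
  have ha : ContDiff ℝ 1 fun p : P d => (f p).re :=
    (Complex.reCLM.contDiff (n := 1)).comp (hf.of_le (by simp))
  have hb : ContDiff ℝ 1 fun p : P d => (f p).im :=
    (Complex.imCLM.contDiff (n := 1)).comp (hf.of_le (by simp))
  exact (ha.pow 2).add (hb.pow 2)

lemma hcs_uu (f : P d → ℂ) (hsupp : HasCompactSupport f) : HasCompactSupport (uu f) := by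
  have : uu f = (fun z : ℂ => z.re ^ 2 + z.im ^ 2) ∘ f := rfl
  rw [this]
  exact hsupp.comp_left (by simp)

lemma hasFDerivAt_uu (f : P d → ℂ) (hf : ContDiff ℝ (⊤ : ℕ∞) f) (p : P d) :
    HasFDerivAt (uu f) ((2 * (f p).re) • (Complex.reCLM.comp (fderiv ℝ f p))
      + (2 * (f p).im) • (Complex.imCLM.comp (fderiv ℝ f p))) p := by
  have hfd : HasFDerivAt f (fderiv ℝ f p) p := (hf.differentiable (by simp) p).hasFDerivAt
  have ha : HasFDerivAt (fun q : P d => (f q).re) (Complex.reCLM.comp (fderiv ℝ f p)) p :=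
    (Complex.reCLM.hasFDerivAt).comp p hfd
  have hb : HasFDerivAt (fun q : P d => (f q).im) (Complex.imCLM.comp (fderiv ℝ f p)) p :=
    (Complex.imCLM.hasFDerivAt).comp p hfd
  have h := (ha.mul ha).add (hb.mul hb)
  have hfun : (fun q : P d => (f q).re * (f q).re + (f q).im * (f q).im) = uu f := by
    funext q; rw [uu]; ring
  rw [← hfun]
  have e1 : ∀ (c : ℝ) (L : P d →L[ℝ] ℝ), (2 * c) • L = c • L + c • L := fun c L => by
    rw [two_mul, add_smul]
  simp only [e1]
  exact h

lemma fderiv_uu_apply (f : P d → ℂ) (hf : ContDiff ℝ (⊤ : ℕ∞) f) (p v : P d) :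
    fderiv ℝ (uu f) p v
      = 2 * (f p).re * (fderiv ℝ f p v).re + 2 * (f p).im * (fderiv ℝ f p v).im := by
  rw [(hasFDerivAt_uu f hf p).fderiv]
  simp [mul_assoc]


lemma cont_fd {F : Type*} [NormedAddCommGroup F] [NormedSpace ℝ F]
    {u : P d → F} (hu : ContDiff ℝ 1 u) (v : P d) :
    Continuous fun p : P d => fderiv ℝ u p v :=
  (hu.continuous_fderiv one_ne_zero).clm_apply continuous_const

lemma hcs_fd {F : Type*} [NormedAddCommGroup F] [NormedSpace ℝ F]
    {u : P d → F} (hsu : HasCompactSupport u) (v : P d) :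
    HasCompactSupport fun p : P d => fderiv ℝ u p v := by
  have h := (hsu.fderiv (𝕜 := ℝ)).comp_left
    (g := fun L : P d →L[ℝ] F => L v) (by simp)
  exact h

lemma cont_XdYd (f : P d → ℂ) (hf : ContDiff ℝ (⊤ : ℕ∞) f) (j : Fin d) :
    Continuous (Xd j f) ∧ Continuous (Yd j f) := by
  have h1 : Continuous fun p : P d => fderiv ℝ f p (eX j) :=
    ((hf.of_le (by simp) : ContDiff ℝ 1 f).continuous_fderiv one_ne_zero).clm_apply continuous_const
  have h2 : Continuous fun p : P d => fderiv ℝ f p (eY j) :=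
    ((hf.of_le (by simp) : ContDiff ℝ 1 f).continuous_fderiv one_ne_zero).clm_apply continuous_const
  have ht : Continuous fun p : P d => fderiv ℝ f p (eT : P d) :=
    ((hf.of_le (by simp) : ContDiff ℝ 1 f).continuous_fderiv one_ne_zero).clm_apply continuous_const
  have hy : Continuous fun p : P d => (2 : ℝ) * p.2.1 j :=
    continuous_const.mul ((continuous_apply j).comp (continuous_fst.comp continuous_snd))
  have hx : Continuous fun p : P d => (2 : ℝ) * p.1 j :=
    continuous_const.mul ((continuous_apply j).comp continuous_fst)
  exact ⟨h1.add (hy.smul ht), h2.sub (hx.smul ht)⟩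

lemma cont_gradHSq (f : P d → ℂ) (hf : ContDiff ℝ (⊤ : ℕ∞) f) : Continuous (gradHSq f) := by
  unfold gradHSq
  apply continuous_finset_sum
  intro j _
  exact (((cont_XdYd f hf j).1.norm).pow 2).add (((cont_XdYd f hf j).2.norm).pow 2)

lemma hcs_gradHSq (f : P d → ℂ) (hsupp : HasCompactSupport f) :
    HasCompactSupport (gradHSq f) := by
  apply (hsupp.fderiv (𝕜 := ℝ)).mono
  intro p hp
  simp only [Function.mem_support, ne_eq] at hp ⊢
  intro h0
  apply hp
  simp [gradHSq, Xd, Yd, h0]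

lemma gradHSq_nonneg (f : P d → ℂ) (p : P d) : 0 ≤ gradHSq f p :=
  Finset.sum_nonneg fun j _ => by positivity

lemma integrable_cw {g : P d → ℝ} (hc : Continuous g) (hcs : HasCompactSupport g) :
    MeasureTheory.Integrable g (volume : MeasureTheory.Measure (P d)) :=
  hc.integrable_of_hasCompactSupport hcs

set_option maxHeartbeats 2000000 in
/-- Pointwise positivity: completing the square. -/
lemma pointwise (f : P d → ℂ) (hf : ContDiff ℝ (⊤ : ℕ∞) f) {ε : ℝ} (hε : 0 < ε) (α : ℝ) (p : P d) :
    0 ≤ gradHSq f p + α ^ 2 * (uu f p * (znormSq p / mu ε p ^ 2))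
      + α * ∑ j, (fderiv ℝ (uu f) p (eX j) * (p.1 j / mu ε p)
          + fderiv ℝ (uu f) p (eY j) * (p.2.1 j / mu ε p)) := by
  have hnorm : ∀ w : ℂ, ‖w‖ ^ 2 = w.re ^ 2 + w.im ^ 2 := fun w => by
    rw [Complex.sq_norm, Complex.normSq_apply]; ring
  have hμ : 0 < mu ε p := mu_pos hε p
  have hne : mu ε p ≠ 0 := hμ.ne'
  set a := (f p).re with ha
  set b := (f p).im with hb
  have key : ∀ j : Fin d,
      (‖Xd j f p‖ ^ 2 + ‖Yd j f p‖ ^ 2)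
        + α ^ 2 * (uu f p * ((p.1 j ^ 2 + p.2.1 j ^ 2) / mu ε p ^ 2))
        + α * (fderiv ℝ (uu f) p (eX j) * (p.1 j / mu ε p)
          + fderiv ℝ (uu f) p (eY j) * (p.2.1 j / mu ε p))
      = ((fderiv ℝ f p (eX j)).re + 2 * p.2.1 j * (fderiv ℝ f p (eT : P d)).re
            + α / mu ε p * p.1 j * a) ^ 2
        + ((fderiv ℝ f p (eX j)).im + 2 * p.2.1 j * (fderiv ℝ f p (eT : P d)).im
            + α / mu ε p * p.1 j * b) ^ 2
        + ((fderiv ℝ f p (eY j)).re - 2 * p.1 j * (fderiv ℝ f p (eT : P d)).re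
            + α / mu ε p * p.2.1 j * a) ^ 2
        + ((fderiv ℝ f p (eY j)).im - 2 * p.1 j * (fderiv ℝ f p (eT : P d)).im
            + α / mu ε p * p.2.1 j * b) ^ 2 := by
    intro j
    rw [fderiv_uu_apply f hf p (eX j), fderiv_uu_apply f hf p (eY j)]
    simp only [Xd, Yd, hnorm, Complex.add_re, Complex.add_im, Complex.sub_re, Complex.sub_im,
      Complex.smul_re, Complex.smul_im, smul_eq_mul, uu, ← ha, ← hb]
    field_simp
    ring
  have hq : znormSq p = ∑ j, (p.1 j ^ 2 + p.2.1 j ^ 2) := by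
    rw [znormSq, Finset.sum_add_distrib]
  have hgr : gradHSq f p = ∑ j, (‖Xd j f p‖ ^ 2 + ‖Yd j f p‖ ^ 2) := rfl
  rw [hgr, hq, Finset.sum_div, Finset.mul_sum, Finset.mul_sum, Finset.mul_sum,
    ← Finset.sum_add_distrib, ← Finset.sum_add_distrib]
  apply Finset.sum_nonneg
  intro j _
  have h := key j
  have h2 : 0 ≤ ((fderiv ℝ f p (eX j)).re + 2 * p.2.1 j * (fderiv ℝ f p (eT : P d)).re
            + α / mu ε p * p.1 j * a) ^ 2
        + ((fderiv ℝ f p (eX j)).im + 2 * p.2.1 j * (fderiv ℝ f p (eT : P d)).im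
            + α / mu ε p * p.1 j * b) ^ 2
        + ((fderiv ℝ f p (eY j)).re - 2 * p.1 j * (fderiv ℝ f p (eT : P d)).re
            + α / mu ε p * p.2.1 j * a) ^ 2
        + ((fderiv ℝ f p (eY j)).im - 2 * p.1 j * (fderiv ℝ f p (eT : P d)).im
            + α / mu ε p * p.2.1 j * b) ^ 2 := by positivity
  have h3 : α ^ 2 * (uu f p * ((p.1 j ^ 2 + p.2.1 j ^ 2) / mu ε p ^ 2))
      = α ^ 2 * (uu f p * (p.1 j ^ 2 + p.2.1 j ^ 2) / mu ε p ^ 2) := by ring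
  nlinarith [h, h2]


lemma cont_weight1 {ε : ℝ} (hε : 0 < ε) (j : Fin d) :
    Continuous fun p : P d => (mu ε p - 2 * p.1 j ^ 2) / mu ε p ^ 2 := by
  apply Continuous.div
  · exact (contDiff_mu ε).continuous.sub
      (continuous_const.mul (((continuous_apply j).comp continuous_fst).pow 2))
  · exact (contDiff_mu ε).continuous.pow 2
  · exact fun p => pow_ne_zero 2 (mu_pos hε p).ne'

lemma cont_weight2 {ε : ℝ} (hε : 0 < ε) (j : Fin d) :
    Continuous fun p : P d => (mu ε p - 2 * p.2.1 j ^ 2) / mu ε p ^ 2 := by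
  apply Continuous.div
  · exact (contDiff_mu ε).continuous.sub
      (continuous_const.mul (((continuous_apply j).comp (continuous_fst.comp continuous_snd)).pow 2))
  · exact (contDiff_mu ε).continuous.pow 2
  · exact fun p => pow_ne_zero 2 (mu_pos hε p).ne'

lemma ibp_j1 {ε : ℝ} (hε : 0 < ε) (u : P d → ℝ) (hu : ContDiff ℝ 1 u)
    (hsu : HasCompactSupport u) (j : Fin d) :
    ∫ p : P d, fderiv ℝ u p (eX j) * (p.1 j / mu ε p)
      = - ∫ p : P d, u p * ((mu ε p - 2 * p.1 j ^ 2) / mu ε p ^ 2) := by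
  have h := ibp u (fun q => q.1 j / mu ε q) hu hsu (contDiff_w1 hε j) (eX j)
  simp only [fderiv_w1_self hε j] at h
  have h1 : MeasureTheory.Integrable
      (fun p : P d => fderiv ℝ u p (eX j) * (p.1 j / mu ε p)) volume :=
    integrable_cw ((cont_fd hu _).mul (contDiff_w1 hε j).continuous) ((hcs_fd hsu _).mul_right)
  have h2 : MeasureTheory.Integrable
      (fun p : P d => u p * ((mu ε p - 2 * p.1 j ^ 2) / mu ε p ^ 2)) volume :=
    integrable_cw ((hu.continuous).mul (cont_weight1 hε j)) (hsu.mul_right)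
  rw [MeasureTheory.integral_add h1 h2] at h
  linarith

lemma ibp_j2 {ε : ℝ} (hε : 0 < ε) (u : P d → ℝ) (hu : ContDiff ℝ 1 u)
    (hsu : HasCompactSupport u) (j : Fin d) :
    ∫ p : P d, fderiv ℝ u p (eY j) * (p.2.1 j / mu ε p)
      = - ∫ p : P d, u p * ((mu ε p - 2 * p.2.1 j ^ 2) / mu ε p ^ 2) := by
  have h := ibp u (fun q => q.2.1 j / mu ε q) hu hsu (contDiff_w2 hε j) (eY j)
  simp only [fderiv_w2_self hε j] at h
  have h1 : MeasureTheory.Integrable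
      (fun p : P d => fderiv ℝ u p (eY j) * (p.2.1 j / mu ε p)) volume :=
    integrable_cw ((cont_fd hu _).mul (contDiff_w2 hε j).continuous) ((hcs_fd hsu _).mul_right)
  have h2 : MeasureTheory.Integrable
      (fun p : P d => u p * ((mu ε p - 2 * p.2.1 j ^ 2) / mu ε p ^ 2)) volume :=
    integrable_cw ((hu.continuous).mul (cont_weight2 hε j)) (hsu.mul_right)
  rw [MeasureTheory.integral_add h1 h2] at h
  linarith

lemma ibp_total {ε : ℝ} (hε : 0 < ε) (u : P d → ℝ) (hu : ContDiff ℝ 1 u)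
    (hsu : HasCompactSupport u) :
    ∫ p : P d, ∑ j, (fderiv ℝ u p (eX j) * (p.1 j / mu ε p)
        + fderiv ℝ u p (eY j) * (p.2.1 j / mu ε p))
      = - ∫ p : P d, u p * ((2 * d * mu ε p - 2 * znormSq p) / mu ε p ^ 2) := by
  have hint1 : ∀ j : Fin d, MeasureTheory.Integrable
      (fun p : P d => fderiv ℝ u p (eX j) * (p.1 j / mu ε p)) volume := fun j =>
    integrable_cw ((cont_fd hu _).mul (contDiff_w1 hε j).continuous) ((hcs_fd hsu _).mul_right)
  have hint2 : ∀ j : Fin d, MeasureTheory.Integrable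
      (fun p : P d => fderiv ℝ u p (eY j) * (p.2.1 j / mu ε p)) volume := fun j =>
    integrable_cw ((cont_fd hu _).mul (contDiff_w2 hε j).continuous) ((hcs_fd hsu _).mul_right)
  have hint3 : ∀ j : Fin d, MeasureTheory.Integrable
      (fun p : P d => u p * ((mu ε p - 2 * p.1 j ^ 2) / mu ε p ^ 2)) volume := fun j =>
    integrable_cw ((hu.continuous).mul (cont_weight1 hε j)) (hsu.mul_right)
  have hint4 : ∀ j : Fin d, MeasureTheory.Integrable
      (fun p : P d => u p * ((mu ε p - 2 * p.2.1 j ^ 2) / mu ε p ^ 2)) volume := fun j =>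
    integrable_cw ((hu.continuous).mul (cont_weight2 hε j)) (hsu.mul_right)
  rw [MeasureTheory.integral_finset_sum (μ := volume) Finset.univ
    (f := fun (j : Fin d) (p : P d) => fderiv ℝ u p (eX j) * (p.1 j / mu ε p)
      + fderiv ℝ u p (eY j) * (p.2.1 j / mu ε p))
    (fun j _ => (hint1 j).add (hint2 j))]
  have step : ∀ j : Fin d,
      (∫ p : P d, (fderiv ℝ u p (eX j) * (p.1 j / mu ε p)
        + fderiv ℝ u p (eY j) * (p.2.1 j / mu ε p)))
      = - ∫ p : P d, (u p * ((mu ε p - 2 * p.1 j ^ 2) / mu ε p ^ 2)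
          + u p * ((mu ε p - 2 * p.2.1 j ^ 2) / mu ε p ^ 2)) := by
    intro j
    rw [MeasureTheory.integral_add (hint1 j) (hint2 j),
      MeasureTheory.integral_add (hint3 j) (hint4 j), ibp_j1 hε u hu hsu j,
      ibp_j2 hε u hu hsu j]
    ring
  simp only [step]
  rw [Finset.sum_neg_distrib, ← MeasureTheory.integral_finset_sum (μ := volume) Finset.univ
    (f := fun (j : Fin d) (p : P d) => u p * ((mu ε p - 2 * p.1 j ^ 2) / mu ε p ^ 2)
      + u p * ((mu ε p - 2 * p.2.1 j ^ 2) / mu ε p ^ 2))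
    (fun j _ => (hint3 j).add (hint4 j))]
  congr 1
  apply MeasureTheory.integral_congr_ae
  filter_upwards with p
  have hpt : ∑ j : Fin d, (u p * ((mu ε p - 2 * p.1 j ^ 2) / mu ε p ^ 2)
      + u p * ((mu ε p - 2 * p.2.1 j ^ 2) / mu ε p ^ 2))
      = u p * ((2 * d * mu ε p - 2 * znormSq p) / mu ε p ^ 2) := by
    simp only [← mul_add, ← Finset.mul_sum]
    congr 1
    simp only [← add_div, ← Finset.sum_div]
    congr 1
    rw [Finset.sum_add_distrib, Finset.sum_sub_distrib, Finset.sum_sub_distrib,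
      Finset.sum_const, Finset.card_univ, Fintype.card_fin, nsmul_eq_mul, znormSq]
    push_cast
    ring_nf
    simp [Finset.sum_mul]
  rw [hpt]

lemma eps_ineq (hd : 2 ≤ d) (f : P d → ℂ) (hf : ContDiff ℝ (⊤ : ℕ∞) f)
    (hsupp : HasCompactSupport f) {ε : ℝ} (hε : 0 < ε) :
    ((d : ℝ) - 1) ^ 2 * ∫ p : P d, uu f p * (znormSq p / mu ε p ^ 2)
      ≤ ∫ p : P d, gradHSq f p := by
  set α : ℝ := (d : ℝ) - 1 with hα
  have hd2 : (2 : ℝ) ≤ (d : ℝ) := by exact_mod_cast hd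
  have hα1 : 1 ≤ α := by rw [hα]; linarith
  have hu := contDiff_uu f hf
  have hus := hcs_uu f hsupp
  have hA : MeasureTheory.Integrable (gradHSq f) volume :=
    integrable_cw (cont_gradHSq f hf) (hcs_gradHSq f hsupp)
  have hcB : Continuous fun p : P d => znormSq p / mu ε p ^ 2 := by
    apply Continuous.div contDiff_znormSq.continuous ((contDiff_mu ε).continuous.pow 2)
    exact fun p => pow_ne_zero 2 (mu_pos hε p).ne'
  have hB : MeasureTheory.Integrable
      (fun p : P d => uu f p * (znormSq p / mu ε p ^ 2)) volume :=
    integrable_cw (hu.continuous.mul hcB) (hus.mul_right)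
  have hSint : MeasureTheory.Integrable
      (fun p : P d => ∑ j, (fderiv ℝ (uu f) p (eX j) * (p.1 j / mu ε p)
        + fderiv ℝ (uu f) p (eY j) * (p.2.1 j / mu ε p))) volume := by
    apply MeasureTheory.integrable_finset_sum
    intro j _
    exact (integrable_cw ((cont_fd hu _).mul (contDiff_w1 hε j).continuous)
        ((hcs_fd hus _).mul_right)).add
      (integrable_cw ((cont_fd hu _).mul (contDiff_w2 hε j).continuous)
        ((hcs_fd hus _).mul_right))
  have hcG : Continuous fun p : P d =>
      (2 * d * mu ε p - 2 * znormSq p) / mu ε p ^ 2 := by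
    apply Continuous.div
    · exact ((continuous_const.mul (contDiff_mu ε).continuous)).sub
        (continuous_const.mul contDiff_znormSq.continuous)
    · exact (contDiff_mu ε).continuous.pow 2
    · exact fun p => pow_ne_zero 2 (mu_pos hε p).ne'
  have hG : MeasureTheory.Integrable
      (fun p : P d => uu f p * ((2 * d * mu ε p - 2 * znormSq p) / mu ε p ^ 2)) volume :=
    integrable_cw (hu.continuous.mul hcG) (hus.mul_right)
  have h0 : 0 ≤ ∫ p : P d, (gradHSq f p + α ^ 2 * (uu f p * (znormSq p / mu ε p ^ 2))
      + α * ∑ j, (fderiv ℝ (uu f) p (eX j) * (p.1 j / mu ε p)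
        + fderiv ℝ (uu f) p (eY j) * (p.2.1 j / mu ε p))) :=
    MeasureTheory.integral_nonneg fun p => pointwise f hf hε α p
  have e1 := MeasureTheory.integral_add (μ := volume)
    (f := fun p : P d => gradHSq f p + α ^ 2 * (uu f p * (znormSq p / mu ε p ^ 2)))
    (g := fun p : P d => α * ∑ j, (fderiv ℝ (uu f) p (eX j) * (p.1 j / mu ε p)
      + fderiv ℝ (uu f) p (eY j) * (p.2.1 j / mu ε p)))
    (hA.add (hB.const_mul (α ^ 2))) (hSint.const_mul α)
  have e2 := MeasureTheory.integral_add (μ := volume) (f := gradHSq f)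
    (g := fun p : P d => α ^ 2 * (uu f p * (znormSq p / mu ε p ^ 2)))
    hA (hB.const_mul (α ^ 2))
  rw [e1, e2, MeasureTheory.integral_const_mul, MeasureTheory.integral_const_mul,
    ibp_total hε (uu f) hu hus] at h0
  have hmono : ∫ p : P d, (2 * (d : ℝ) - 2) * (uu f p * (znormSq p / mu ε p ^ 2))
      ≤ ∫ p : P d, uu f p * ((2 * d * mu ε p - 2 * znormSq p) / mu ε p ^ 2) := by
    apply MeasureTheory.integral_mono (hB.const_mul _) hG
    intro p
    dsimp only
    have hq0 := znormSq_nonneg p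
    have hμ := mu_pos hε p
    have hu0 := uu_nonneg f p
    have hqμ : znormSq p ≤ mu ε p := by unfold mu; linarith
    have e1 : (2 * (d : ℝ) - 2) * (uu f p * (znormSq p / mu ε p ^ 2))
        = ((2 * (d : ℝ) - 2) * (uu f p * znormSq p)) / mu ε p ^ 2 := by ring
    have e2 : uu f p * ((2 * d * mu ε p - 2 * znormSq p) / mu ε p ^ 2)
        = (uu f p * (2 * d * mu ε p - 2 * znormSq p)) / mu ε p ^ 2 := by ring
    rw [e1, e2]
    apply (div_le_div_iff_of_pos_right (by positivity)).mpr
    nlinarith [mul_le_mul_of_nonneg_left hqμ hu0, hd2]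
  rw [MeasureTheory.integral_const_mul] at hmono
  have h5 : α * ((2 * (d : ℝ) - 2) * ∫ p : P d, uu f p * (znormSq p / mu ε p ^ 2))
      ≤ α * ∫ p : P d, uu f p * ((2 * d * mu ε p - 2 * znormSq p) / mu ε p ^ 2) :=
    mul_le_mul_of_nonneg_left hmono (by linarith)
  have e3 : (2 * (d : ℝ) - 2) = 2 * α := by rw [hα]; ring
  rw [e3] at h5
  nlinarith [h0, h5]

end Stmt15Aux
end

set_option maxHeartbeats 1000000 in
open Heis in
/-- horizontal Hardy inequality on the Heisenberg group, `d ≥ 2`. -/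
theorem stmt15 {d : ℕ} (hd : 2 ≤ d)
    (f : P d → ℂ) (hf : ContDiff ℝ (⊤ : ℕ∞) f) (hsupp : HasCompactSupport f) :
    ∫⁻ p : P d, ENNReal.ofReal (‖f p‖ ^ 2 / znormSq p)
      ≤ ENNReal.ofReal ((1 / ((d : ℝ) - 1)) ^ 2) *
        ∫⁻ p : P d, ENNReal.ofReal (gradHSq f p) := by
  have hd2 : (2 : ℝ) ≤ (d : ℝ) := by exact_mod_cast hd
  have hdpos : (0 : ℝ) < (d : ℝ) - 1 := by linarith
  have hu := Stmt15Aux.contDiff_uu f hf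
  have hus := Stmt15Aux.hcs_uu f hsupp
  have hA : MeasureTheory.Integrable (gradHSq f) volume :=
    Stmt15Aux.integrable_cw (Stmt15Aux.cont_gradHSq f hf) (Stmt15Aux.hcs_gradHSq f hsupp)
  have hεk : ∀ k : ℕ, (0 : ℝ) < 1 / ((k : ℝ) + 1) := fun k => by positivity
  have hcg : ∀ k : ℕ, Continuous fun p : P d =>
      Stmt15Aux.uu f p * (znormSq p / Stmt15Aux.mu (1 / ((k : ℝ) + 1)) p ^ 2) := by
    intro k
    apply hu.continuous.mul
    apply Continuous.div Stmt15Aux.contDiff_znormSq.continuous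
      ((Stmt15Aux.contDiff_mu _).continuous.pow 2)
    exact fun p => pow_ne_zero 2 (Stmt15Aux.mu_pos (hεk k) p).ne'
  have hgint : ∀ k : ℕ, MeasureTheory.Integrable
      (fun p : P d => Stmt15Aux.uu f p * (znormSq p / Stmt15Aux.mu (1 / ((k : ℝ) + 1)) p ^ 2)) volume :=
    fun k => Stmt15Aux.integrable_cw (hcg k) (hus.mul_right)
  have hgnn : ∀ (k : ℕ) (p : P d),
      0 ≤ Stmt15Aux.uu f p * (znormSq p / Stmt15Aux.mu (1 / ((k : ℝ) + 1)) p ^ 2) := fun k p =>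
    mul_nonneg (Stmt15Aux.uu_nonneg f p)
      (div_nonneg (Stmt15Aux.znormSq_nonneg p) (by positivity))
  have hmono : ∀ p : P d, Monotone fun k : ℕ =>
      ENNReal.ofReal (Stmt15Aux.uu f p * (znormSq p / Stmt15Aux.mu (1 / ((k : ℝ) + 1)) p ^ 2)) := by
    intro p k m hkm
    apply ENNReal.ofReal_le_ofReal
    have hq0 := Stmt15Aux.znormSq_nonneg p
    have hdm : (0 : ℝ) < znormSq p + 1 / ((m : ℝ) + 1) := by have := hεk m; linarith
    have hdk : (0 : ℝ) < znormSq p + 1 / ((k : ℝ) + 1) := by have := hεk k; linarith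
    have h1 : (1 : ℝ) / ((m : ℝ) + 1) ≤ 1 / ((k : ℝ) + 1) := by
      apply one_div_le_one_div_of_le (by positivity)
      have : (k : ℝ) ≤ (m : ℝ) := by exact_mod_cast hkm
      linarith
    have h2 : (znormSq p + 1 / ((m : ℝ) + 1)) ^ 2
        ≤ (znormSq p + 1 / ((k : ℝ) + 1)) ^ 2 := by nlinarith
    have h3 : znormSq p / (znormSq p + 1 / ((k : ℝ) + 1)) ^ 2
        ≤ znormSq p / (znormSq p + 1 / ((m : ℝ) + 1)) ^ 2 := by
      rw [div_le_div_iff₀ (by positivity) (by positivity)]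
      nlinarith [mul_le_mul_of_nonneg_left h2 hq0]
    have hmu1 : Stmt15Aux.mu (1 / ((k : ℝ) + 1)) p = znormSq p + 1 / ((k : ℝ) + 1) := rfl
    have hmu2 : Stmt15Aux.mu (1 / ((m : ℝ) + 1)) p = znormSq p + 1 / ((m : ℝ) + 1) := rfl
    rw [hmu1, hmu2]
    exact mul_le_mul_of_nonneg_left h3 (Stmt15Aux.uu_nonneg f p)
  have hsup : ∀ p : P d,
      (⨆ k : ℕ, ENNReal.ofReal (Stmt15Aux.uu f p * (znormSq p / Stmt15Aux.mu (1 / ((k : ℝ) + 1)) p ^ 2)))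
        = ENNReal.ofReal (‖f p‖ ^ 2 / znormSq p) := by
    intro p
    rcases eq_or_lt_of_le (Stmt15Aux.znormSq_nonneg p) with h0 | hq
    · simp [Stmt15Aux.mu, ← h0]
    · have htμ : Filter.Tendsto (fun k : ℕ => Stmt15Aux.mu (1 / ((k : ℝ) + 1)) p)
          Filter.atTop (nhds (znormSq p)) := by
        have h := tendsto_one_div_add_atTop_nhds_zero_nat (𝕜 := ℝ)
        have h2 := (tendsto_const_nhds (x := znormSq p)
          (f := Filter.atTop (α := ℕ))).add h
        simpa [Stmt15Aux.mu] using h2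
      have ht : Filter.Tendsto
          (fun k : ℕ => Stmt15Aux.uu f p * (znormSq p / Stmt15Aux.mu (1 / ((k : ℝ) + 1)) p ^ 2))
          Filter.atTop (nhds (Stmt15Aux.uu f p * (znormSq p / znormSq p ^ 2))) :=
        tendsto_const_nhds.mul (Filter.Tendsto.div tendsto_const_nhds (htμ.pow 2)
          (pow_ne_zero 2 hq.ne'))
      have ht2 := (ENNReal.continuous_ofReal.tendsto _).comp ht
      have hs := tendsto_atTop_iSup (hmono p)
      rw [tendsto_nhds_unique hs ht2]
      congr 1
      rw [Stmt15Aux.uu_eq]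
      field_simp
  calc ∫⁻ p : P d, ENNReal.ofReal (‖f p‖ ^ 2 / znormSq p)
      = ∫⁻ p : P d, ⨆ k : ℕ,
          ENNReal.ofReal (Stmt15Aux.uu f p * (znormSq p / Stmt15Aux.mu (1 / ((k : ℝ) + 1)) p ^ 2)) := by
        apply MeasureTheory.lintegral_congr
        intro p
        rw [hsup p]
    _ = ⨆ k : ℕ, ∫⁻ p : P d,
          ENNReal.ofReal (Stmt15Aux.uu f p * (znormSq p / Stmt15Aux.mu (1 / ((k : ℝ) + 1)) p ^ 2)) := by
        apply MeasureTheory.lintegral_iSup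
        · exact fun k => ((hcg k).measurable).ennreal_ofReal
        · intro k m hkm p
          exact hmono p hkm
    _ ≤ ENNReal.ofReal ((1 / ((d : ℝ) - 1)) ^ 2) *
        ∫⁻ p : P d, ENNReal.ofReal (gradHSq f p) := by
        rw [← MeasureTheory.ofReal_integral_eq_lintegral_ofReal hA
          (Filter.Eventually.of_forall (Stmt15Aux.gradHSq_nonneg f))]
        apply iSup_le
        intro k
        rw [← MeasureTheory.ofReal_integral_eq_lintegral_ofReal (hgint k)
          (Filter.Eventually.of_forall (hgnn k))]
        rw [← ENNReal.ofReal_mul (by positivity)]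
        apply ENNReal.ofReal_le_ofReal
        have h := Stmt15Aux.eps_ineq hd f hf hsupp (hεk k)
        have hpos : (0 : ℝ) < ((d : ℝ) - 1) ^ 2 := by positivity
        have h2 : (∫ p : P d, Stmt15Aux.uu f p * (znormSq p / Stmt15Aux.mu (1 / ((k : ℝ) + 1)) p ^ 2))
            ≤ (∫ p : P d, gradHSq f p) / ((d : ℝ) - 1) ^ 2 := by
          rw [le_div_iff₀ hpos]
          linarith [h]
        have e : (∫ p : P d, gradHSq f p) / ((d : ℝ) - 1) ^ 2
            = (1 / ((d : ℝ) - 1)) ^ 2 * ∫ p : P d, gradHSq f p := by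
          rw [div_pow, one_pow, div_mul_eq_mul_div, one_mul]
        linarith [h2]
end

section
/- (Weighted horizontal Hardy inequality.) Let d ≥ 1 be an integer. For every smooth compactly supported f : ℝ^{2d}×ℝ → ℂ, ∫ |f(z,t)|²/|z| dz dt ≤ (2/(2d−1))² ∫ |z| |∇_H f(z,t)|² dz dt. -/
open MeasureTheory Real Set
open scoped ENNReal NNReal BigOperators

-- AUX START
noncomputable section HardyAux
open Heis MeasureTheory Real
open scoped ENNReal

variable {d : ℕ}

/-- coordinate CLM `p ↦ p.1 j` -/
def cX (j : Fin d) : P d →L[ℝ] ℝ :=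
  (ContinuousLinearMap.proj j).comp (ContinuousLinearMap.fst ℝ (Fin d → ℝ) ((Fin d → ℝ) × ℝ))

/-- coordinate CLM `p ↦ p.2.1 j` -/
def cY (j : Fin d) : P d →L[ℝ] ℝ :=
  (ContinuousLinearMap.proj j).comp
    ((ContinuousLinearMap.fst ℝ (Fin d → ℝ) ℝ).comp
      (ContinuousLinearMap.snd ℝ (Fin d → ℝ) ((Fin d → ℝ) × ℝ)))

@[simp] lemma cX_apply (j : Fin d) (p : P d) : cX j p = p.1 j := rfl
@[simp] lemma cY_apply (j : Fin d) (p : P d) : cY j p = p.2.1 j := rfl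

def Dq (p : P d) : P d →L[ℝ] ℝ :=
  (∑ j, (2 * p.1 j) • cX j) + ∑ j, (2 * p.2.1 j) • cY j

lemma Dq_apply (p v : P d) :
    Dq p v = (∑ j, 2 * p.1 j * v.1 j) + ∑ j, 2 * p.2.1 j * v.2.1 j := by
  simp [Dq, mul_assoc]

@[simp] lemma Dq_eX (p : P d) (i : Fin d) : Dq p (eX i) = 2 * p.1 i := by
  rw [Dq_apply]
  simp [eX, Pi.single_apply, mul_ite, Finset.sum_ite_eq']

@[simp] lemma Dq_eY (p : P d) (i : Fin d) : Dq p (eY i) = 2 * p.2.1 i := by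
  rw [Dq_apply]
  simp [eY, Pi.single_apply, mul_ite, Finset.sum_ite_eq']

@[simp] lemma Dq_eT (p : P d) : Dq p eT = 0 := by
  rw [Dq_apply]; simp [eT]

lemma znormSq_nonneg (p : P d) : 0 ≤ znormSq p := by
  have h1 : (0:ℝ) ≤ ∑ j, p.1 j ^ 2 := Finset.sum_nonneg fun j _ => sq_nonneg _
  have h2 : (0:ℝ) ≤ ∑ j, p.2.1 j ^ 2 := Finset.sum_nonneg fun j _ => sq_nonneg _
  exact add_nonneg h1 h2

lemma hasFDerivAt_znormSq (p : P d) : HasFDerivAt znormSq (Dq p) p := by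
  have h : HasFDerivAt (fun q : P d => (∑ j, cX j q * cX j q) + ∑ j, cY j q * cY j q)
      ((∑ j, (cX j p • cX j + cX j p • cX j)) + ∑ j, (cY j p • cY j + cY j p • cY j)) p := by
    refine HasFDerivAt.fun_add ?_ ?_ <;> exact HasFDerivAt.fun_sum fun j _ =>
      ((ContinuousLinearMap.hasFDerivAt _).fun_mul (ContinuousLinearMap.hasFDerivAt _))
  have hfun : (znormSq : P d → ℝ)
      = fun q : P d => (∑ j, cX j q * cX j q) + ∑ j, cY j q * cY j q := by
    funext q; simp [znormSq, sq]
  rw [hfun]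
  convert h using 1
  refine ContinuousLinearMap.ext fun v => ?_
  simp only [Dq, ContinuousLinearMap.add_apply, ContinuousLinearMap.coe_sum',
    Finset.sum_apply, ContinuousLinearMap.smul_apply, cX_apply, cY_apply, smul_eq_mul]
  congr 1 <;> exact Finset.sum_congr rfl fun j _ => by ring

lemma continuous_znormSq : Continuous (znormSq (d := d)) := by
  refine Continuous.add ?_ ?_ <;> refine continuous_finset_sum _ fun j _ => Continuous.pow ?_ 2
  · exact (continuous_apply j).comp continuous_fst
  · exact (continuous_apply j).comp (continuous_fst.comp continuous_snd)

/-- regularized weight `√(|z|² + ε²)` -/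
def wP (ε : ℝ) (p : P d) : ℝ := Real.sqrt (znormSq p + ε ^ 2)

variable {ε : ℝ}

lemma wP_pos (hε : ε ≠ 0) (p : P d) : 0 < wP ε p :=
  Real.sqrt_pos.2 (by have := znormSq_nonneg p; positivity)

lemma wP_sq (p : P d) : wP ε p ^ 2 = znormSq p + ε ^ 2 :=
  Real.sq_sqrt (by have := znormSq_nonneg p; positivity)

lemma znorm_le_wP (p : P d) : znorm p ≤ wP ε p :=
  Real.sqrt_le_sqrt (by nlinarith [sq_nonneg ε])

lemma znorm_nonneg (p : P d) : 0 ≤ znorm p := Real.sqrt_nonneg _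

lemma znormSq_le_wP_sq (p : P d) : znormSq p ≤ wP ε p ^ 2 := by
  rw [wP_sq]; nlinarith [sq_nonneg ε]

lemma continuous_wP : Continuous (wP (d := d) ε) :=
  (continuous_znormSq.add continuous_const).sqrt

lemma hasFDerivAt_wP (hε : ε ≠ 0) (p : P d) :
    HasFDerivAt (wP ε) ((1 / (2 * wP ε p)) • Dq p) p := by
  have h0 : znormSq p + ε ^ 2 ≠ 0 := by have := znormSq_nonneg p; positivity
  exact (Real.hasDerivAt_sqrt h0).comp_hasFDerivAt p
    ((hasFDerivAt_znormSq p).add_const (ε ^ 2))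

lemma hasFDerivAt_wPinv (hε : ε ≠ 0) (p : P d) :
    HasFDerivAt (fun q => (wP ε q)⁻¹)
      ((-((wP ε p ^ 2)⁻¹)) • ((1 / (2 * wP ε p)) • Dq p)) p :=
  (hasDerivAt_inv (wP_pos hε p).ne').comp_hasFDerivAt p (hasFDerivAt_wP hε p)


lemma hasFDerivAt_gX (hε : ε ≠ 0) (j : Fin d) (p : P d) :
    HasFDerivAt (fun q : P d => q.1 j * (wP ε q)⁻¹)
      (p.1 j • ((-((wP ε p ^ 2)⁻¹)) • ((1 / (2 * wP ε p)) • Dq p)) + (wP ε p)⁻¹ • cX j) p :=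
  ((cX j).hasFDerivAt (x := p)).mul (hasFDerivAt_wPinv hε p)

lemma hasFDerivAt_gY (hε : ε ≠ 0) (j : Fin d) (p : P d) :
    HasFDerivAt (fun q : P d => q.2.1 j * (wP ε q)⁻¹)
      (p.2.1 j • ((-((wP ε p ^ 2)⁻¹)) • ((1 / (2 * wP ε p)) • Dq p)) + (wP ε p)⁻¹ • cY j) p :=
  ((cY j).hasFDerivAt (x := p)).mul (hasFDerivAt_wPinv hε p)

lemma fderiv_gX_eval (hε : ε ≠ 0) (j : Fin d) (p : P d) :
    fderiv ℝ (fun q : P d => q.1 j * (wP ε q)⁻¹) p (eX j)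
      = (wP ε p)⁻¹ - p.1 j ^ 2 * ((wP ε p) ^ 3)⁻¹ := by
  rw [(hasFDerivAt_gX hε j p).fderiv]
  have hw := (wP_pos hε p).ne'
  have h1 : cX j (eX j) = 1 := by simp [eX]
  simp only [ContinuousLinearMap.add_apply, ContinuousLinearMap.smul_apply, smul_eq_mul,
    Dq_eX, h1]
  field_simp
  ring

lemma fderiv_gY_eval (hε : ε ≠ 0) (j : Fin d) (p : P d) :
    fderiv ℝ (fun q : P d => q.2.1 j * (wP ε q)⁻¹) p (eY j)
      = (wP ε p)⁻¹ - p.2.1 j ^ 2 * ((wP ε p) ^ 3)⁻¹ := by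
  rw [(hasFDerivAt_gY hε j p).fderiv]
  have hw := (wP_pos hε p).ne'
  have h1 : cY j (eY j) = 1 := by simp [eY]
  simp only [ContinuousLinearMap.add_apply, ContinuousLinearMap.smul_apply, smul_eq_mul,
    Dq_eY, h1]
  field_simp
  ring

lemma continuous_wPinv (hε : ε ≠ 0) : Continuous (fun q : P d => (wP ε q)⁻¹) :=
  continuous_wP.inv₀ fun p => (wP_pos hε p).ne'

section Ufun

variable (f : P d → ℂ)

/-- `u = ‖f‖²` -/
def uF (p : P d) : ℝ := ‖f p‖ ^ 2

/-- candidate derivative of `uF` -/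
def DuF (p : P d) : P d →L[ℝ] ℝ :=
  (2 * (f p).re) • (Complex.reCLM.comp (fderiv ℝ f p))
    + (2 * (f p).im) • (Complex.imCLM.comp (fderiv ℝ f p))

variable {f}

lemma uF_eq : uF f = fun p => (f p).re * (f p).re + (f p).im * (f p).im := by
  funext p
  rw [uF, Complex.sq_norm, Complex.normSq_apply]


lemma hasFDerivAt_uF (hf : ContDiff ℝ (⊤ : ℕ∞) f) (p : P d) : HasFDerivAt (uF f) (DuF f p) p := by
  have hfd : HasFDerivAt f (fderiv ℝ f p) p := (hf.differentiable (by simp) p).hasFDerivAt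
  have h1 : HasFDerivAt (fun q => (f q).re) (Complex.reCLM.comp (fderiv ℝ f p)) p :=
    (Complex.reCLM.hasFDerivAt).comp p hfd
  have h2 : HasFDerivAt (fun q => (f q).im) (Complex.imCLM.comp (fderiv ℝ f p)) p :=
    (Complex.imCLM.hasFDerivAt).comp p hfd
  have h3 := (h1.fun_mul h1).fun_add (h2.fun_mul h2)
  rw [uF_eq]
  refine h3.congr_fderiv ?_
  refine ContinuousLinearMap.ext fun v => ?_
  simp only [DuF, ContinuousLinearMap.add_apply, ContinuousLinearMap.smul_apply,
    ContinuousLinearMap.coe_comp', Function.comp_apply, smul_eq_mul]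
  ring

lemma contDiff_uF (hf : ContDiff ℝ (⊤ : ℕ∞) f) : ContDiff ℝ (⊤ : ℕ∞) (uF f) := by
  rw [uF_eq]
  exact ((Complex.reCLM.contDiff.comp hf).mul (Complex.reCLM.contDiff.comp hf)).add
    ((Complex.imCLM.contDiff.comp hf).mul (Complex.imCLM.contDiff.comp hf))

lemma hasCompactSupport_uF (hsupp : HasCompactSupport f) : HasCompactSupport (uF f) :=
  hsupp.comp_left (g := fun z : ℂ => ‖z‖ ^ 2) (by simp)

lemma fderiv_uF (hf : ContDiff ℝ (⊤ : ℕ∞) f) (p : P d) : fderiv ℝ (uF f) p = DuF f p :=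
  (hasFDerivAt_uF hf p).fderiv

/-- 2-dimensional Cauchy-Schwarz -/
lemma two_cs (a b c' d' : ℝ) :
    |a * c' + b * d'| ≤ Real.sqrt (a ^ 2 + b ^ 2) * Real.sqrt (c' ^ 2 + d' ^ 2) := by
  have h : (a * c' + b * d') ^ 2 ≤ (a ^ 2 + b ^ 2) * (c' ^ 2 + d' ^ 2) := by
    nlinarith [sq_nonneg (a * d' - b * c')]
  calc |a * c' + b * d'| = Real.sqrt ((a * c' + b * d') ^ 2) := (Real.sqrt_sq_eq_abs _).symm
    _ ≤ Real.sqrt ((a ^ 2 + b ^ 2) * (c' ^ 2 + d' ^ 2)) := Real.sqrt_le_sqrt h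
    _ = _ := Real.sqrt_mul (by positivity) _

lemma cnorm_eq (z : ℂ) : ‖z‖ = Real.sqrt (z.re ^ 2 + z.im ^ 2) := by
  rw [Complex.norm_def, Complex.normSq_apply]
  ring_nf

lemma abs_DuF_le (p v : P d) : |DuF f p v| ≤ 2 * ‖f p‖ * ‖fderiv ℝ f p v‖ := by
  have h : DuF f p v
      = 2 * ((f p).re * (fderiv ℝ f p v).re + (f p).im * (fderiv ℝ f p v).im) := by
    simp only [DuF, ContinuousLinearMap.add_apply, ContinuousLinearMap.smul_apply,
      ContinuousLinearMap.coe_comp', Function.comp_apply, smul_eq_mul]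
    simp
    ring
  rw [h, abs_mul, abs_two, cnorm_eq, cnorm_eq]
  have := two_cs (f p).re (f p).im (fderiv ℝ f p v).re (fderiv ℝ f p v).im
  nlinarith [this, abs_nonneg ((f p).re * (fderiv ℝ f p v).re + (f p).im * (fderiv ℝ f p v).im)]

lemma Xd_linear {F : Type*} [NormedAddCommGroup F] [NormedSpace ℝ F]
    (u' : P d → F) (j : Fin d) (p : P d) :
    Xd j u' p = fderiv ℝ u' p (eX j + (2 * p.2.1 j) • eT) := by
  simp [Xd]

lemma Yd_linear {F : Type*} [NormedAddCommGroup F] [NormedSpace ℝ F]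
    (u' : P d → F) (j : Fin d) (p : P d) :
    Yd j u' p = fderiv ℝ u' p (eY j - (2 * p.1 j) • eT) := by
  simp [Yd]

/-- the horizontal radial combination showing up after integration by parts -/
def SF (f : P d → ℂ) (p : P d) : ℝ :=
  ∑ j, (fderiv ℝ (uF f) p (eX j) * p.1 j + fderiv ℝ (uF f) p (eY j) * p.2.1 j)

lemma gradHSq_nonneg (p : P d) : 0 ≤ gradHSq f p :=
  Finset.sum_nonneg fun j _ => add_nonneg (sq_nonneg _) (sq_nonneg _)

lemma gradHNorm_nonneg (p : P d) : 0 ≤ gradHNorm f p := Real.sqrt_nonneg _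

lemma SF_bound (hf : ContDiff ℝ (⊤ : ℕ∞) f) (p : P d) :
    |SF f p| ≤ 2 * ‖f p‖ * gradHNorm f p * znorm p := by
  classical
  -- rewrite SF using the horizontal vector fields
  have hS : SF f p = ∑ j, (Xd j (uF f) p * p.1 j + Yd j (uF f) p * p.2.1 j) := by
    refine Finset.sum_congr rfl fun j _ => ?_
    simp only [Xd, Yd, smul_eq_mul]
    have hT : fderiv ℝ (uF f) p eT = DuF f p eT := by rw [fderiv_uF hf]
    ring
  rw [hS]
  -- termwise 2-dim Cauchy-Schwarz
  have h1 : |∑ j, (Xd j (uF f) p * p.1 j + Yd j (uF f) p * p.2.1 j)|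
      ≤ ∑ j, Real.sqrt (Xd j (uF f) p ^ 2 + Yd j (uF f) p ^ 2)
          * Real.sqrt (p.1 j ^ 2 + p.2.1 j ^ 2) := by
    refine (Finset.abs_sum_le_sum_abs _ _).trans (Finset.sum_le_sum fun j _ => two_cs _ _ _ _)
  -- Cauchy-Schwarz over j
  have h2 : ∑ j, Real.sqrt (Xd j (uF f) p ^ 2 + Yd j (uF f) p ^ 2)
          * Real.sqrt (p.1 j ^ 2 + p.2.1 j ^ 2)
      ≤ Real.sqrt (∑ j, (Xd j (uF f) p ^ 2 + Yd j (uF f) p ^ 2))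
          * Real.sqrt (∑ j, (p.1 j ^ 2 + p.2.1 j ^ 2)) :=
    Real.sum_sqrt_mul_sqrt_le _ (fun j => by positivity) (fun j => by positivity)
  have h3 : Real.sqrt (∑ j, (p.1 j ^ 2 + p.2.1 j ^ 2)) = znorm p := by
    rw [znorm, znormSq, Finset.sum_add_distrib]
  have h4 : Real.sqrt (∑ j, (Xd j (uF f) p ^ 2 + Yd j (uF f) p ^ 2))
      ≤ 2 * ‖f p‖ * gradHNorm f p := by
    have hterm : ∀ j : Fin d, Xd j (uF f) p ^ 2 + Yd j (uF f) p ^ 2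
        ≤ 4 * ‖f p‖ ^ 2 * (‖Xd j f p‖ ^ 2 + ‖Yd j f p‖ ^ 2) := by
      intro j
      have hX : |Xd j (uF f) p| ≤ 2 * ‖f p‖ * ‖Xd j f p‖ := by
        rw [Xd_linear (uF f) j p, fderiv_uF hf, Xd_linear f j p]
        exact abs_DuF_le p _
      have hY : |Yd j (uF f) p| ≤ 2 * ‖f p‖ * ‖Yd j f p‖ := by
        rw [Yd_linear (uF f) j p, fderiv_uF hf, Yd_linear f j p]
        exact abs_DuF_le p _
      have hX2 : Xd j (uF f) p ^ 2 ≤ (2 * ‖f p‖ * ‖Xd j f p‖) ^ 2 := by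
        rw [← sq_abs]
        exact pow_le_pow_left₀ (abs_nonneg _) hX 2
      have hY2 : Yd j (uF f) p ^ 2 ≤ (2 * ‖f p‖ * ‖Yd j f p‖) ^ 2 := by
        rw [← sq_abs]
        exact pow_le_pow_left₀ (abs_nonneg _) hY 2
      nlinarith
    calc Real.sqrt (∑ j, (Xd j (uF f) p ^ 2 + Yd j (uF f) p ^ 2))
        ≤ Real.sqrt (4 * ‖f p‖ ^ 2 * gradHSq f p) := by
          refine Real.sqrt_le_sqrt ?_
          rw [gradHSq, Finset.mul_sum]
          exact Finset.sum_le_sum fun j _ => hterm j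
      _ = 2 * ‖f p‖ * gradHNorm f p := by
          rw [gradHNorm, Real.sqrt_mul (by positivity), show (4:ℝ) * ‖f p‖ ^ 2 = (2 * ‖f p‖)^2 by ring,
            Real.sqrt_sq (by positivity)]
  calc |∑ j, (Xd j (uF f) p * p.1 j + Yd j (uF f) p * p.2.1 j)|
      ≤ Real.sqrt (∑ j, (Xd j (uF f) p ^ 2 + Yd j (uF f) p ^ 2))
          * Real.sqrt (∑ j, (p.1 j ^ 2 + p.2.1 j ^ 2)) := h1.trans h2
    _ ≤ (2 * ‖f p‖ * gradHNorm f p) * znorm p := by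
        rw [h3]
        exact mul_le_mul_of_nonneg_right h4 (znorm_nonneg p)


lemma cont_fderiv_apply {F : Type*} [NormedAddCommGroup F] [NormedSpace ℝ F]
    {u' : P d → F} (hu' : ContDiff ℝ (⊤ : ℕ∞) u') (v : P d) :
    Continuous fun p => fderiv ℝ u' p v :=
  (hu'.continuous_fderiv (by simp)).clm_apply continuous_const

lemma continuous_SF (hf : ContDiff ℝ (⊤ : ℕ∞) f) : Continuous (SF f) := by
  refine continuous_finset_sum _ fun j _ => Continuous.add ?_ ?_
  · exact (cont_fderiv_apply (contDiff_uF hf) (eX j)).mul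
      ((continuous_apply j).comp continuous_fst)
  · exact (cont_fderiv_apply (contDiff_uF hf) (eY j)).mul
      ((continuous_apply j).comp (continuous_fst.comp continuous_snd))

lemma hasCompactSupport_SF (hsupp : HasCompactSupport f) : HasCompactSupport (SF f) := by
  refine HasCompactSupport.mono' ((hasCompactSupport_uF hsupp).fderiv ℝ) ?_
  intro p hp
  by_contra hmem
  have h0 : fderiv ℝ (uF f) p = 0 := by
    by_contra h
    exact hmem (subset_closure (by simpa [Function.mem_support] using h))
  apply hp
  simp [SF, h0]

lemma continuous_XdF (hf : ContDiff ℝ (⊤ : ℕ∞) f) (j : Fin d) : Continuous (Xd j f) := by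
  refine Continuous.add (cont_fderiv_apply hf (eX j)) ?_
  exact (continuous_const.mul ((continuous_apply j).comp
    (continuous_fst.comp continuous_snd))).smul (cont_fderiv_apply hf eT)

lemma continuous_YdF (hf : ContDiff ℝ (⊤ : ℕ∞) f) (j : Fin d) : Continuous (Yd j f) := by
  refine Continuous.sub (cont_fderiv_apply hf (eY j)) ?_
  exact (continuous_const.mul ((continuous_apply j).comp
    continuous_fst)).smul (cont_fderiv_apply hf eT)

lemma continuous_gradHSq (hf : ContDiff ℝ (⊤ : ℕ∞) f) : Continuous (gradHSq f) :=
  continuous_finset_sum _ fun j _ =>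
    (((continuous_XdF hf j).norm).pow 2).add (((continuous_YdF hf j).norm).pow 2)

lemma continuous_gradHNorm (hf : ContDiff ℝ (⊤ : ℕ∞) f) : Continuous (gradHNorm f) :=
  (continuous_gradHSq hf).sqrt

instance : Measure.IsAddHaarMeasure (volume : Measure ((Fin d → ℝ) × ℝ)) :=
  Measure.prod.instIsAddHaarMeasure _ _

instance : Measure.IsAddHaarMeasure (volume : Measure (P d)) :=
  Measure.prod.instIsAddHaarMeasure _ _

/-- Integration by parts: the total divergence identity. -/
lemma ibp_total (hf : ContDiff ℝ (⊤ : ℕ∞) f) (hsupp : HasCompactSupport f) (hε : ε ≠ 0) :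
    ∫ p : P d, uF f p * (2 * (d:ℝ) * (wP ε p)⁻¹ - znormSq p * ((wP ε p) ^ 3)⁻¹)
      = - ∫ p : P d, SF f p * (wP ε p)⁻¹ := by
  classical
  have hu_cd := contDiff_uF (f := f) hf
  have hu_cs := hasCompactSupport_uF (f := f) hsupp
  have hu_cont := hu_cd.continuous
  have hu_diff : Differentiable ℝ (uF f) := hu_cd.differentiable (by simp)
  have hwinv := continuous_wPinv (d := d) hε
  have hw3inv : Continuous fun p : P d => ((wP ε p) ^ 3)⁻¹ :=
    (continuous_wP.pow 3).inv₀ fun p => by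
      exact pow_ne_zero 3 (wP_pos hε p).ne'
  have hcoordX : ∀ j : Fin d, Continuous fun p : P d => p.1 j :=
    fun j => (continuous_apply j).comp continuous_fst
  have hcoordY : ∀ j : Fin d, Continuous fun p : P d => p.2.1 j :=
    fun j => (continuous_apply j).comp (continuous_fst.comp continuous_snd)
  -- the integrands
  set L : Fin d → P d → ℝ := fun j p =>
    uF f p * ((wP ε p)⁻¹ - p.1 j ^ 2 * ((wP ε p) ^ 3)⁻¹)
      + uF f p * ((wP ε p)⁻¹ - p.2.1 j ^ 2 * ((wP ε p) ^ 3)⁻¹) with hL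
  set R : Fin d → P d → ℝ := fun j p =>
    fderiv ℝ (uF f) p (eX j) * (p.1 j * (wP ε p)⁻¹)
      + fderiv ℝ (uF f) p (eY j) * (p.2.1 j * (wP ε p)⁻¹) with hR
  have hcontLX : ∀ j : Fin d, Continuous fun p : P d =>
      uF f p * ((wP ε p)⁻¹ - p.1 j ^ 2 * ((wP ε p) ^ 3)⁻¹) :=
    fun j => hu_cont.mul (hwinv.sub (((hcoordX j).pow 2).mul hw3inv))
  have hcontLY : ∀ j : Fin d, Continuous fun p : P d =>
      uF f p * ((wP ε p)⁻¹ - p.2.1 j ^ 2 * ((wP ε p) ^ 3)⁻¹) :=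
    fun j => hu_cont.mul (hwinv.sub (((hcoordY j).pow 2).mul hw3inv))
  have hintLX : ∀ j : Fin d, Integrable fun p : P d =>
      uF f p * ((wP ε p)⁻¹ - p.1 j ^ 2 * ((wP ε p) ^ 3)⁻¹) :=
    fun j => ((hcontLX j).integrable_of_hasCompactSupport hu_cs.mul_right)
  have hintLY : ∀ j : Fin d, Integrable fun p : P d =>
      uF f p * ((wP ε p)⁻¹ - p.2.1 j ^ 2 * ((wP ε p) ^ 3)⁻¹) :=
    fun j => ((hcontLY j).integrable_of_hasCompactSupport hu_cs.mul_right)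
  have hintRX : ∀ j : Fin d, Integrable fun p : P d =>
      fderiv ℝ (uF f) p (eX j) * (p.1 j * (wP ε p)⁻¹) :=
    fun j => ((cont_fderiv_apply hu_cd (eX j)).mul ((hcoordX j).mul hwinv)
      ).integrable_of_hasCompactSupport ((hu_cs.fderiv_apply ℝ (eX j)).mul_right)
  have hintRY : ∀ j : Fin d, Integrable fun p : P d =>
      fderiv ℝ (uF f) p (eY j) * (p.2.1 j * (wP ε p)⁻¹) :=
    fun j => ((cont_fderiv_apply hu_cd (eY j)).mul ((hcoordY j).mul hwinv)
      ).integrable_of_hasCompactSupport ((hu_cs.fderiv_apply ℝ (eY j)).mul_right)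
  -- integration by parts in each coordinate direction
  have keyX : ∀ j : Fin d,
      ∫ p : P d, uF f p * ((wP ε p)⁻¹ - p.1 j ^ 2 * ((wP ε p) ^ 3)⁻¹)
        = - ∫ p : P d, fderiv ℝ (uF f) p (eX j) * (p.1 j * (wP ε p)⁻¹) := by
    intro j
    have hgdiff : Differentiable ℝ (fun q : P d => q.1 j * (wP ε q)⁻¹) :=
      fun p => (hasFDerivAt_gX hε j p).differentiableAt
    have h2 : Integrable fun p : P d =>
        uF f p * fderiv ℝ (fun q : P d => q.1 j * (wP ε q)⁻¹) p (eX j) := by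
      have heq : (fun p : P d =>
          uF f p * fderiv ℝ (fun q : P d => q.1 j * (wP ε q)⁻¹) p (eX j))
          = fun p => uF f p * ((wP ε p)⁻¹ - p.1 j ^ 2 * ((wP ε p) ^ 3)⁻¹) :=
        funext fun p => by rw [fderiv_gX_eval hε]
      rw [heq]; exact hintLX j
    have h3 : Integrable fun p : P d => uF f p * (p.1 j * (wP ε p)⁻¹) :=
      (hu_cont.mul ((hcoordX j).mul hwinv)).integrable_of_hasCompactSupport hu_cs.mul_right
    have h := integral_mul_fderiv_eq_neg_fderiv_mul_of_integrable
      (hintRX j) h2 h3 (fun x _ => hu_diff x) (fun x _ => hgdiff x)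
    simpa only [fderiv_gX_eval hε] using h
  have keyY : ∀ j : Fin d,
      ∫ p : P d, uF f p * ((wP ε p)⁻¹ - p.2.1 j ^ 2 * ((wP ε p) ^ 3)⁻¹)
        = - ∫ p : P d, fderiv ℝ (uF f) p (eY j) * (p.2.1 j * (wP ε p)⁻¹) := by
    intro j
    have hgdiff : Differentiable ℝ (fun q : P d => q.2.1 j * (wP ε q)⁻¹) :=
      fun p => (hasFDerivAt_gY hε j p).differentiableAt
    have h2 : Integrable fun p : P d =>
        uF f p * fderiv ℝ (fun q : P d => q.2.1 j * (wP ε q)⁻¹) p (eY j) := by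
      have heq : (fun p : P d =>
          uF f p * fderiv ℝ (fun q : P d => q.2.1 j * (wP ε q)⁻¹) p (eY j))
          = fun p => uF f p * ((wP ε p)⁻¹ - p.2.1 j ^ 2 * ((wP ε p) ^ 3)⁻¹) :=
        funext fun p => by rw [fderiv_gY_eval hε]
      rw [heq]; exact hintLY j
    have h3 : Integrable fun p : P d => uF f p * (p.2.1 j * (wP ε p)⁻¹) :=
      (hu_cont.mul ((hcoordY j).mul hwinv)).integrable_of_hasCompactSupport hu_cs.mul_right
    have h := integral_mul_fderiv_eq_neg_fderiv_mul_of_integrable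
      (hintRY j) h2 h3 (fun x _ => hu_diff x) (fun x _ => hgdiff x)
    simpa only [fderiv_gY_eval hε] using h
  have keyj : ∀ j : Fin d, ∫ p : P d, L j p = - ∫ p : P d, R j p := by
    intro j
    rw [hL, hR]
    rw [integral_add (hintLX j) (hintLY j), integral_add (hintRX j) (hintRY j),
      keyX j, keyY j]
    ring
  have hintL : ∀ j : Fin d, Integrable (L j) := fun j => (hintLX j).add (hintLY j)
  have hintR : ∀ j : Fin d, Integrable (R j) := fun j => (hintRX j).add (hintRY j)
  -- pointwise identification of the sums
  have hsumL : (fun p : P d => uF f p *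
      (2 * (d:ℝ) * (wP ε p)⁻¹ - znormSq p * ((wP ε p) ^ 3)⁻¹)) = fun p => ∑ j, L j p := by
    funext p
    rw [hL]
    have hsum : ∑ j : Fin d, (((wP ε p)⁻¹ - p.1 j ^ 2 * ((wP ε p) ^ 3)⁻¹)
        + ((wP ε p)⁻¹ - p.2.1 j ^ 2 * ((wP ε p) ^ 3)⁻¹))
        = 2 * (d:ℝ) * (wP ε p)⁻¹ - znormSq p * ((wP ε p) ^ 3)⁻¹ := by
      have h1 : ∀ j : Fin d, (((wP ε p)⁻¹ - p.1 j ^ 2 * ((wP ε p) ^ 3)⁻¹)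
          + ((wP ε p)⁻¹ - p.2.1 j ^ 2 * ((wP ε p) ^ 3)⁻¹))
          = 2 * (wP ε p)⁻¹ - (p.1 j ^ 2 + p.2.1 j ^ 2) * ((wP ε p) ^ 3)⁻¹ :=
        fun j => by ring
      rw [Finset.sum_congr rfl fun j _ => h1 j, Finset.sum_sub_distrib,
        Finset.sum_const, Finset.card_univ, Fintype.card_fin, ← Finset.sum_mul,
        nsmul_eq_mul, Finset.sum_add_distrib]
      rw [znormSq]
      ring
    calc uF f p * (2 * (d:ℝ) * (wP ε p)⁻¹ - znormSq p * ((wP ε p) ^ 3)⁻¹)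
        = uF f p * ∑ j : Fin d, (((wP ε p)⁻¹ - p.1 j ^ 2 * ((wP ε p) ^ 3)⁻¹)
            + ((wP ε p)⁻¹ - p.2.1 j ^ 2 * ((wP ε p) ^ 3)⁻¹)) := by rw [hsum]
      _ = _ := by rw [Finset.mul_sum]; exact Finset.sum_congr rfl fun j _ => by ring
  have hsumR : (fun p : P d => SF f p * (wP ε p)⁻¹) = fun p => ∑ j, R j p := by
    funext p
    rw [hR, SF, Finset.sum_mul]
    exact Finset.sum_congr rfl fun j _ => by ring
  rw [hsumL, hsumR, integral_finset_sum _ (fun j _ => hintL j),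
    integral_finset_sum _ (fun j _ => hintR j),
    Finset.sum_congr rfl fun j _ => keyj j, ← Finset.sum_neg_distrib]


lemma uF_nonneg (p : P d) : 0 ≤ uF f p := by rw [uF]; positivity

lemma continuous_znorm : Continuous (znorm (d := d)) := continuous_znormSq.sqrt

lemma integrable_uw (hf : ContDiff ℝ (⊤ : ℕ∞) f) (hsupp : HasCompactSupport f) (hε : ε ≠ 0) :
    Integrable fun p : P d => uF f p * (wP ε p)⁻¹ :=
  ((contDiff_uF hf).continuous.mul (continuous_wPinv hε)).integrable_of_hasCompactSupport
    (hasCompactSupport_uF hsupp).mul_right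

lemma integrable_Psi (hf : ContDiff ℝ (⊤ : ℕ∞) f) (hsupp : HasCompactSupport f) (hε : ε ≠ 0) :
    Integrable fun p : P d => 2 * ‖f p‖ * gradHNorm f p * znorm p * (wP ε p)⁻¹ := by
  refine Continuous.integrable_of_hasCompactSupport ?_ ?_
  · exact (((((continuous_const.mul hf.continuous.norm)).mul
      (continuous_gradHNorm hf)).mul continuous_znorm).mul (continuous_wPinv hε))
  · refine HasCompactSupport.mono' hsupp.norm ?_
    intro p hp
    by_contra hmem
    have h0 : ‖f p‖ = 0 := by
      by_contra h
      exact hmem (subset_closure (by simpa [Function.mem_support] using h))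
    exact hp (by simp [h0])

/-- The key inequality at the regularized level. -/
lemma real_ineq (hd : 1 ≤ d) (hf : ContDiff ℝ (⊤ : ℕ∞) f) (hsupp : HasCompactSupport f)
    (hε : ε ≠ 0) :
    (2 * (d:ℝ) - 1) * ∫ p : P d, uF f p * (wP ε p)⁻¹
      ≤ ∫ p : P d, 2 * ‖f p‖ * gradHNorm f p * znorm p * (wP ε p)⁻¹ := by
  have hu_cont := (contDiff_uF (f := f) hf).continuous
  have hu_cs := hasCompactSupport_uF (f := f) hsupp
  have hwinv := continuous_wPinv (d := d) hε
  have hw3inv : Continuous fun p : P d => ((wP ε p) ^ 3)⁻¹ :=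
    (continuous_wP.pow 3).inv₀ fun p => pow_ne_zero 3 (wP_pos hε p).ne'
  have hintuw := integrable_uw hf hsupp hε
  have hintD : Integrable fun p : P d =>
      uF f p * (2 * (d:ℝ) * (wP ε p)⁻¹ - znormSq p * ((wP ε p) ^ 3)⁻¹) :=
    (hu_cont.mul ((continuous_const.mul hwinv).sub
      (continuous_znormSq.mul hw3inv))).integrable_of_hasCompactSupport hu_cs.mul_right
  have hintS : Integrable fun p : P d => SF f p * (wP ε p)⁻¹ :=
    ((continuous_SF hf).mul hwinv).integrable_of_hasCompactSupport
      (hasCompactSupport_SF hsupp).mul_right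
  have hintPsi := integrable_Psi hf hsupp hε
  have step2 : ∫ p : P d, (2 * (d:ℝ) - 1) * (uF f p * (wP ε p)⁻¹)
      ≤ ∫ p : P d, uF f p * (2 * (d:ℝ) * (wP ε p)⁻¹ - znormSq p * ((wP ε p) ^ 3)⁻¹) := by
    refine integral_mono (hintuw.const_mul _) hintD fun p => ?_
    have hw := wP_pos hε p
    have key : (2 * (d:ℝ) - 1) * (wP ε p)⁻¹
        ≤ 2 * (d:ℝ) * (wP ε p)⁻¹ - znormSq p * ((wP ε p) ^ 3)⁻¹ := by
      have h1 : znormSq p * ((wP ε p) ^ 3)⁻¹ ≤ (wP ε p) ^ 2 * ((wP ε p) ^ 3)⁻¹ :=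
        mul_le_mul_of_nonneg_right (znormSq_le_wP_sq p) (by positivity)
      have h2 : (wP ε p) ^ 2 * ((wP ε p) ^ 3)⁻¹ = (wP ε p)⁻¹ := by
        field_simp
      rw [h2] at h1
      linarith
    have := mul_le_mul_of_nonneg_left key (uF_nonneg (f := f) p)
    calc (2 * (d:ℝ) - 1) * (uF f p * (wP ε p)⁻¹)
        = uF f p * ((2 * (d:ℝ) - 1) * (wP ε p)⁻¹) := by ring
      _ ≤ _ := this
  have step4 : - ∫ p : P d, SF f p * (wP ε p)⁻¹
      ≤ ∫ p : P d, 2 * ‖f p‖ * gradHNorm f p * znorm p * (wP ε p)⁻¹ := by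
    have h4a : - ∫ p : P d, SF f p * (wP ε p)⁻¹ ≤ ∫ p : P d, |SF f p * (wP ε p)⁻¹| := by
      have hn := norm_integral_le_integral_norm (μ := volume)
        (f := fun p : P d => SF f p * (wP ε p)⁻¹)
      simp only [Real.norm_eq_abs] at hn
      exact (neg_le_abs _).trans hn
    refine h4a.trans (integral_mono hintS.abs hintPsi fun p => ?_)
    have hw := wP_pos hε p
    have habs : |SF f p * (wP ε p)⁻¹| = |SF f p| * (wP ε p)⁻¹ := by
      rw [abs_mul, abs_inv, abs_of_pos hw]
    rw [habs]
    calc |SF f p| * (wP ε p)⁻¹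
        ≤ (2 * ‖f p‖ * gradHNorm f p * znorm p) * (wP ε p)⁻¹ :=
          mul_le_mul_of_nonneg_right (SF_bound hf p) (by positivity)
      _ = _ := by ring
  calc (2 * (d:ℝ) - 1) * ∫ p : P d, uF f p * (wP ε p)⁻¹
      = ∫ p : P d, (2 * (d:ℝ) - 1) * (uF f p * (wP ε p)⁻¹) := (integral_const_mul _ _).symm
    _ ≤ ∫ p : P d, uF f p * (2 * (d:ℝ) * (wP ε p)⁻¹ - znormSq p * ((wP ε p) ^ 3)⁻¹) := step2
    _ = - ∫ p : P d, SF f p * (wP ε p)⁻¹ := ibp_total hf hsupp hε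
    _ ≤ _ := step4


lemma four_rpow_half : (4 : ℝ≥0∞) ^ ((1:ℝ)/2) = 2 := by
  have h4 : (4 : ℝ≥0∞) = (2 : ℝ≥0∞) ^ (2:ℕ) := by norm_num
  rw [h4, ← ENNReal.rpow_natCast, ← ENNReal.rpow_mul]
  norm_num

/-- The regularized weighted Hardy inequality, in `ℝ≥0∞` form. -/
lemma eps_bound (hd : 1 ≤ d) (hf : ContDiff ℝ (⊤ : ℕ∞) f) (hsupp : HasCompactSupport f)
    (hε : ε ≠ 0) :
    ∫⁻ p : P d, ENNReal.ofReal (uF f p * (wP ε p)⁻¹)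
      ≤ ENNReal.ofReal ((2 / (2 * (d:ℝ) - 1)) ^ 2)
          * ∫⁻ p : P d, ENNReal.ofReal (znorm p * gradHSq f p) := by
  have hc1 : (1:ℝ) ≤ 2 * (d:ℝ) - 1 := by
    have : (1:ℝ) ≤ (d:ℝ) := by exact_mod_cast hd
    linarith
  set A := ∫⁻ p : P d, ENNReal.ofReal (uF f p * (wP ε p)⁻¹) with hA
  set B := ∫⁻ p : P d, ENNReal.ofReal (znorm p * gradHSq f p) with hB
  have hwinv_nonneg : ∀ p : P d, (0:ℝ) ≤ (wP ε p)⁻¹ :=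
    fun p => inv_nonneg.2 (Real.sqrt_nonneg _)
  have hAeq : A = ENNReal.ofReal (∫ p : P d, uF f p * (wP ε p)⁻¹) :=
    (ofReal_integral_eq_lintegral_ofReal (integrable_uw hf hsupp hε)
      (Filter.Eventually.of_forall fun p =>
        mul_nonneg (uF_nonneg p) (hwinv_nonneg p))).symm
  have hAne : A ≠ ⊤ := by rw [hAeq]; exact ENNReal.ofReal_ne_top
  -- the two Hölder factors
  set h1f : P d → ℝ≥0∞ := fun p => ENNReal.ofReal (‖f p‖ * Real.sqrt ((wP ε p)⁻¹)) with hh1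
  set h2f : P d → ℝ≥0∞ := fun p =>
    ENNReal.ofReal (2 * gradHNorm f p * znorm p * Real.sqrt ((wP ε p)⁻¹)) with hh2
  have hs : ∀ p : P d, Real.sqrt ((wP ε p)⁻¹) * Real.sqrt ((wP ε p)⁻¹) = (wP ε p)⁻¹ :=
    fun p => Real.mul_self_sqrt (hwinv_nonneg p)
  have hmul : ∀ p : P d, ENNReal.ofReal
      (2 * ‖f p‖ * gradHNorm f p * znorm p * (wP ε p)⁻¹) = (h1f * h2f) p := by
    intro p
    rw [Pi.mul_apply, hh1, hh2, ← ENNReal.ofReal_mul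
      (mul_nonneg (norm_nonneg _) (Real.sqrt_nonneg _))]
    congr 1
    rw [show ‖f p‖ * Real.sqrt ((wP ε p)⁻¹)
        * (2 * gradHNorm f p * znorm p * Real.sqrt ((wP ε p)⁻¹))
        = 2 * ‖f p‖ * gradHNorm f p * znorm p
            * (Real.sqrt ((wP ε p)⁻¹) * Real.sqrt ((wP ε p)⁻¹)) from by ring, hs p]
  have h1meas : AEMeasurable h1f volume :=
    (ENNReal.continuous_ofReal.comp
      (hf.continuous.norm.mul ((continuous_wPinv hε).sqrt))).aemeasurable
  have h2meas : AEMeasurable h2f volume :=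
    (ENNReal.continuous_ofReal.comp
      (((continuous_const.mul (continuous_gradHNorm hf)).mul continuous_znorm).mul
        ((continuous_wPinv hε).sqrt))).aemeasurable
  have hconj : Real.HolderConjugate 2 2 := Real.HolderConjugate.two_two
  have hHolder := ENNReal.lintegral_mul_le_Lp_mul_Lq volume hconj h1meas h2meas
  have e1 : ∀ p : P d, h1f p ^ (2:ℝ) = ENNReal.ofReal (uF f p * (wP ε p)⁻¹) := by
    intro p
    rw [show h1f p ^ (2:ℝ) = h1f p ^ (2:ℕ) from by rw [← ENNReal.rpow_natCast]; norm_num,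
      hh1, ← ENNReal.ofReal_pow (mul_nonneg (norm_nonneg _) (Real.sqrt_nonneg _))]
    congr 1
    rw [mul_pow, Real.sq_sqrt (hwinv_nonneg p), uF]
  have e2 : ∀ p : P d, h2f p ^ (2:ℝ) ≤ ENNReal.ofReal (4 * (znorm p * gradHSq f p)) := by
    intro p
    have hnn : (0:ℝ) ≤ 2 * gradHNorm f p * znorm p * Real.sqrt ((wP ε p)⁻¹) :=
      mul_nonneg (mul_nonneg (mul_nonneg (by norm_num) (gradHNorm_nonneg p))
        (znorm_nonneg p)) (Real.sqrt_nonneg _)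
    rw [show h2f p ^ (2:ℝ) = h2f p ^ (2:ℕ) from by rw [← ENNReal.rpow_natCast]; norm_num,
      hh2, ← ENNReal.ofReal_pow hnn]
    refine ENNReal.ofReal_le_ofReal ?_
    have hw := wP_pos hε p
    have hzw : znorm p * (wP ε p)⁻¹ ≤ 1 := by
      rw [← div_eq_mul_inv]
      exact div_le_one_of_le₀ (znorm_le_wP p) hw.le
    have hG2 : gradHNorm f p ^ 2 = gradHSq f p := Real.sq_sqrt (gradHSq_nonneg p)
    have hsq : Real.sqrt ((wP ε p)⁻¹) ^ 2 = (wP ε p)⁻¹ := Real.sq_sqrt (hwinv_nonneg p)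
    have hfac : (0:ℝ) ≤ 4 * gradHSq f p * znorm p :=
      mul_nonneg (mul_nonneg (by norm_num) (gradHSq_nonneg p)) (znorm_nonneg p)
    calc (2 * gradHNorm f p * znorm p * Real.sqrt ((wP ε p)⁻¹)) ^ 2
        = 4 * (gradHNorm f p ^ 2) * (znorm p * znorm p)
            * (Real.sqrt ((wP ε p)⁻¹) ^ 2) := by ring
      _ = 4 * gradHSq f p * znorm p * (znorm p * (wP ε p)⁻¹) := by
          rw [hG2, hsq]; ring
      _ ≤ 4 * gradHSq f p * znorm p * 1 := mul_le_mul_of_nonneg_left hzw hfac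
      _ = 4 * (znorm p * gradHSq f p) := by ring
  -- conclude Hölder with explicit values
  have hint2 : ∫⁻ p : P d, h2f p ^ (2:ℝ) ≤ 4 * B := by
    calc ∫⁻ p : P d, h2f p ^ (2:ℝ)
        ≤ ∫⁻ p : P d, ENNReal.ofReal (4 * (znorm p * gradHSq f p)) := lintegral_mono e2
      _ = ∫⁻ p : P d, 4 * ENNReal.ofReal (znorm p * gradHSq f p) := by
          refine lintegral_congr fun p => ?_
          rw [ENNReal.ofReal_mul (by norm_num)]
          norm_num
      _ = 4 * B := lintegral_const_mul' _ _ (by norm_num)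
  have hmain : ENNReal.ofReal (2 * (d:ℝ) - 1) * A ≤ A ^ ((1:ℝ)/2) * (2 * B ^ ((1:ℝ)/2)) := by
    calc ENNReal.ofReal (2 * (d:ℝ) - 1) * A
        = ENNReal.ofReal ((2 * (d:ℝ) - 1) * ∫ p : P d, uF f p * (wP ε p)⁻¹) := by
          rw [hAeq, ← ENNReal.ofReal_mul (by linarith)]
      _ ≤ ENNReal.ofReal (∫ p : P d,
            2 * ‖f p‖ * gradHNorm f p * znorm p * (wP ε p)⁻¹) :=
          ENNReal.ofReal_le_ofReal (real_ineq hd hf hsupp hε)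
      _ = ∫⁻ p : P d, ENNReal.ofReal
            (2 * ‖f p‖ * gradHNorm f p * znorm p * (wP ε p)⁻¹) :=
          ofReal_integral_eq_lintegral_ofReal (integrable_Psi hf hsupp hε)
            (Filter.Eventually.of_forall fun p =>
              mul_nonneg (mul_nonneg (mul_nonneg (mul_nonneg (by norm_num)
                (norm_nonneg _)) (gradHNorm_nonneg p)) (znorm_nonneg p)) (hwinv_nonneg p))
      _ = ∫⁻ p : P d, (h1f * h2f) p := lintegral_congr hmul
      _ ≤ (∫⁻ p : P d, h1f p ^ (2:ℝ)) ^ ((1:ℝ)/2)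
            * (∫⁻ p : P d, h2f p ^ (2:ℝ)) ^ ((1:ℝ)/2) := hHolder
      _ = A ^ ((1:ℝ)/2) * (∫⁻ p : P d, h2f p ^ (2:ℝ)) ^ ((1:ℝ)/2) := by
          rw [lintegral_congr e1]
      _ ≤ A ^ ((1:ℝ)/2) * ((4 * B) ^ ((1:ℝ)/2)) := by
          exact mul_le_mul_right (ENNReal.rpow_le_rpow hint2 (by norm_num)) _
      _ = A ^ ((1:ℝ)/2) * (2 * B ^ ((1:ℝ)/2)) := by
          rw [ENNReal.mul_rpow_of_nonneg _ _ (by norm_num : (0:ℝ) ≤ 1/2), four_rpow_half]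
  -- cancellation
  by_cases hA0 : A = 0
  · rw [hA0]; positivity
  set c := ENNReal.ofReal (2 * (d:ℝ) - 1) with hc
  have hc0 : c ≠ 0 := by
    rw [hc]; simp only [ne_eq, ENNReal.ofReal_eq_zero, not_le]; linarith
  have hcne : c ≠ ⊤ := ENNReal.ofReal_ne_top
  set a := A ^ ((1:ℝ)/2) with ha
  set b := B ^ ((1:ℝ)/2) with hb
  have ha0 : a ≠ 0 := by
    rw [ha]
    intro h
    rcases ENNReal.rpow_eq_zero_iff.1 h with ⟨h1, -⟩ | ⟨h1, -⟩
    · exact hA0 h1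
    · exact hAne h1
  have hane : a ≠ ⊤ := by
    rw [ha]; exact ENNReal.rpow_ne_top_of_nonneg (by norm_num) hAne
  have hAsplit : A = a * a := by
    rw [ha, ← ENNReal.rpow_add _ _ hA0 hAne]; norm_num
  have hcancel : c * a ≤ 2 * b := by
    rw [← ENNReal.mul_le_mul_iff_left ha0 hane]
    calc c * a * a = c * A := by rw [hAsplit]; ring
      _ ≤ a * (2 * b) := hmain
      _ = 2 * b * a := by ring
  have hsq2 : (c * a) ^ (2:ℝ) ≤ (2 * b) ^ (2:ℝ) :=
    ENNReal.rpow_le_rpow hcancel (by norm_num)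
  have hA2 : a ^ (2:ℝ) = A := by rw [ha, ← ENNReal.rpow_mul]; norm_num
  have hB2 : b ^ (2:ℝ) = B := by rw [hb, ← ENNReal.rpow_mul]; norm_num
  have h2e : (2:ℝ≥0∞) ^ (2:ℝ) = 4 := by
    rw [show (2:ℝ≥0∞) ^ (2:ℝ) = (2:ℝ≥0∞) ^ (2:ℕ) from by
      rw [← ENNReal.rpow_natCast]; norm_num]
    norm_num
  rw [ENNReal.mul_rpow_of_nonneg _ _ (by norm_num : (0:ℝ) ≤ 2), hA2,
    ENNReal.mul_rpow_of_nonneg _ _ (by norm_num : (0:ℝ) ≤ 2), hB2, h2e] at hsq2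
  have hc2_0 : c ^ (2:ℝ) ≠ 0 := by
    intro h
    rcases ENNReal.rpow_eq_zero_iff.1 h with ⟨h1, -⟩ | ⟨h1, -⟩
    · exact hc0 h1
    · exact hcne h1
  have hc2ne : c ^ (2:ℝ) ≠ ⊤ := ENNReal.rpow_ne_top_of_nonneg (by norm_num) hcne
  have hfinal : A ≤ (c ^ (2:ℝ))⁻¹ * (4 * B) := by
    calc A = (c ^ (2:ℝ))⁻¹ * (c ^ (2:ℝ) * A) := by
          rw [← mul_assoc, ENNReal.inv_mul_cancel hc2_0 hc2ne, one_mul]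
      _ ≤ (c ^ (2:ℝ))⁻¹ * (4 * B) := mul_le_mul_right hsq2 _
  have hcoef : (c ^ (2:ℝ))⁻¹ * 4 = ENNReal.ofReal ((2 / (2 * (d:ℝ) - 1)) ^ 2) := by
    have hne : (2 * (d:ℝ) - 1) ≠ 0 := by linarith
    have hpow : c ^ (2:ℝ) = ENNReal.ofReal ((2 * (d:ℝ) - 1) ^ 2) := by
      rw [show c ^ (2:ℝ) = c ^ (2:ℕ) from by rw [← ENNReal.rpow_natCast]; norm_num,
        hc, ← ENNReal.ofReal_pow (by linarith)]
    rw [hpow, ← ENNReal.ofReal_inv_of_pos (pow_pos (by linarith) 2),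
      show (4:ℝ≥0∞) = ENNReal.ofReal (4:ℝ) from by norm_num,
      ← ENNReal.ofReal_mul (by positivity)]
    congr 1
    field_simp
    ring
  calc A ≤ (c ^ (2:ℝ))⁻¹ * (4 * B) := hfinal
    _ = ((c ^ (2:ℝ))⁻¹ * 4) * B := by ring
    _ = _ := by rw [hcoef]
end Ufun
end HardyAux

open Heis MeasureTheory Real in
theorem stmt16' {d : ℕ} (hd : 1 ≤ d)
    (f : P d → ℂ) (hf : ContDiff ℝ (⊤ : ℕ∞) f) (hsupp : HasCompactSupport f) :
    ∫⁻ p : P d, ENNReal.ofReal (‖f p‖ ^ 2 / znorm p)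
      ≤ ENNReal.ofReal ((2 / (2 * (d : ℝ) - 1)) ^ 2) *
        ∫⁻ p : P d, ENNReal.ofReal (znorm p * gradHSq f p) := by
  classical
  set g : ℕ → P d → ℝ≥0∞ := fun n p =>
    ENNReal.ofReal (uF f p * (wP (1/((n:ℝ)+1)) p)⁻¹) with hg
  have hεpos : ∀ n : ℕ, (0:ℝ) < 1/((n:ℝ)+1) := fun n => by positivity
  have hmeas : ∀ n : ℕ, Measurable (g n) := by
    intro n
    exact (ENNReal.continuous_ofReal.comp ((contDiff_uF hf).continuous.mul
      (continuous_wPinv (hεpos n).ne'))).measurable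
  have hmono : Monotone g := by
    intro n m hnm
    intro p
    apply ENNReal.ofReal_le_ofReal
    refine mul_le_mul_of_nonneg_left ?_ (uF_nonneg p)
    have hw : wP (1/((m:ℝ)+1)) p ≤ wP (1/((n:ℝ)+1)) p := by
      refine Real.sqrt_le_sqrt (add_le_add le_rfl ?_)
      have h1 : (1:ℝ)/((m:ℝ)+1) ≤ 1/((n:ℝ)+1) := by
        apply one_div_le_one_div_of_le (by positivity)
        have : (n:ℝ) ≤ (m:ℝ) := by exact_mod_cast hnm
        linarith
      exact pow_le_pow_left₀ (hεpos m).le h1 2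
    exact inv_anti₀ (wP_pos (hεpos m).ne' p) hw
  have ptwise : ∀ p : P d, ENNReal.ofReal (‖f p‖ ^ 2 / znorm p) ≤ ⨆ n : ℕ, g n p := by
    intro p
    by_cases hz : znorm p = 0
    · rw [hz, div_zero]
      simp
    · have htends : Filter.Tendsto (fun n : ℕ => uF f p * (wP (1/((n:ℝ)+1)) p)⁻¹)
          Filter.atTop (nhds (uF f p * (znorm p)⁻¹)) := by
        have h1 : Filter.Tendsto (fun n : ℕ => 1/((n:ℝ)+1)) Filter.atTop (nhds 0) :=
          tendsto_one_div_add_atTop_nhds_zero_nat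
        have h2 : Filter.Tendsto (fun n : ℕ => znormSq p + (1/((n:ℝ)+1))^2)
            Filter.atTop (nhds (znormSq p + 0^2)) :=
          Filter.Tendsto.add tendsto_const_nhds (h1.pow 2)
        have h3 : Filter.Tendsto (fun n : ℕ => wP (1/((n:ℝ)+1)) p)
            Filter.atTop (nhds (znorm p)) := by
          have := (Real.continuous_sqrt.tendsto (znormSq p + 0^2)).comp h2
          simpa [wP, znorm, Function.comp_def] using this
        exact Filter.Tendsto.mul tendsto_const_nhds (h3.inv₀ hz)
      have htends2 : Filter.Tendsto (fun n : ℕ => g n p) Filter.atTop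
          (nhds (ENNReal.ofReal (uF f p * (znorm p)⁻¹))) :=
        (ENNReal.continuous_ofReal.tendsto _).comp htends
      have hle := le_of_tendsto' htends2 (fun n => le_iSup (fun n => g n p) n)
      rwa [show ‖f p‖ ^ 2 / znorm p = uF f p * (znorm p)⁻¹ from by
        rw [div_eq_mul_inv]; rfl]
  calc ∫⁻ p : P d, ENNReal.ofReal (‖f p‖ ^ 2 / znorm p)
      ≤ ∫⁻ p : P d, ⨆ n : ℕ, g n p := lintegral_mono ptwise
    _ = ⨆ n : ℕ, ∫⁻ p : P d, g n p := lintegral_iSup hmeas hmono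
    _ ≤ ENNReal.ofReal ((2 / (2 * (d : ℝ) - 1)) ^ 2) *
        ∫⁻ p : P d, ENNReal.ofReal (znorm p * gradHSq f p) :=
      iSup_le fun n => eps_bound hd hf hsupp (hεpos n).ne'

open Heis in
/-- weighted horizontal Hardy inequality on the Heisenberg group. -/
theorem stmt16 {d : ℕ} (hd : 1 ≤ d)
    (f : P d → ℂ) (hf : ContDiff ℝ (⊤ : ℕ∞) f) (hsupp : HasCompactSupport f) :
    ∫⁻ p : P d, ENNReal.ofReal (‖f p‖ ^ 2 / znorm p)
      ≤ ENNReal.ofReal ((2 / (2 * (d : ℝ) - 1)) ^ 2) *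
        ∫⁻ p : P d, ENNReal.ofReal (znorm p * gradHSq f p) := by
  exact stmt16' hd f hf hsupp
end
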